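/- arXiv:1410.6263 — 5 statements merged into one kernel-verified Lean document; each statement's English description precedes it below -/
import Mathlib

section
/- There is a universal constant C > 0 such that for any n ∈ ℕ and any subset T of the unit sphere S^{n-1} ⊂ ℝⁿ, there exists a finite subset N ⊂ T of cardinality at most exp(C·n) such that every y ∈ T has some y' ∈ N with ‖y - y'‖_∞ ≤ n^{-1/2}. -/
/-!
Round `√n • y` coordinatewise to an integer vector. By Cauchy–Schwarz `∑ |yᵢ| ≤ √n`, so the
rounded vector lies in the integer `ℓ¹`-ball of radius `2n`, which has at most `2^(2n) 4^n = 16^n`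
points. Keeping one point of `T` per rounding class gives the net: two points with the same
rounding differ by at most `1/√n` in every coordinate.
-/

open Finset

lemma sum_Icc_half_pow_natAbs_le (m : ℕ) :
    ∑ t ∈ Icc (-(m : ℤ)) m, (1 / 2 : ℝ) ^ t.natAbs ≤ 4 := by
  set f : ℤ → ℝ := fun t => (1 / 2 : ℝ) ^ t.natAbs
  set pos := (range (m + 1)).image (fun i : ℕ => (i : ℤ))
  set neg := (range (m + 1)).image (fun i : ℕ => -(i : ℤ))
  have hcover : Icc (-(m : ℤ)) m ⊆ pos ∪ neg := by
    intro t ht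
    rw [mem_Icc] at ht
    simp only [pos, neg, mem_union, mem_image, mem_range]
    rcases le_total 0 t with h | h
    · exact Or.inl ⟨t.toNat, by omega, by omega⟩
    · exact Or.inr ⟨(-t).toNat, by omega, by omega⟩
  have hpos : ∑ t ∈ pos, f t ≤ 2 := by
    rw [sum_image fun _ _ _ _ h => by simpa using h]
    simpa [f] using sum_geometric_two_le (m + 1)
  have hneg : ∑ t ∈ neg, f t ≤ 2 := by
    rw [sum_image fun _ _ _ _ h => by simpa using h]
    simpa [f] using sum_geometric_two_le (m + 1)
  have hinter : 0 ≤ ∑ t ∈ pos ∩ neg, f t := sum_nonneg fun _ _ => by positivity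
  calc ∑ t ∈ Icc (-(m : ℤ)) m, f t ≤ ∑ t ∈ pos ∪ neg, f t :=
        sum_le_sum_of_subset_of_nonneg hcover fun _ _ _ => by positivity
    _ ≤ 4 := by linarith [sum_union_inter (s₁ := pos) (s₂ := neg) (f := f)]

section IntegerL1Ball

variable (ι : Type*) [Fintype ι] [DecidableEq ι]

noncomputable def integerL1Ball (m : ℕ) : Finset (ι → ℤ) :=
  {k ∈ Fintype.piFinset fun _ => Icc (-(m : ℤ)) m | ∑ i, (k i).natAbs ≤ m}

variable {ι}

lemma mem_integerL1Ball {m : ℕ} {k : ι → ℤ} :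
    k ∈ integerL1Ball ι m ↔ ∑ i, (k i).natAbs ≤ m := by
  refine ⟨fun hk => (mem_filter.mp hk).2, fun hk => mem_filter.mpr ⟨?_, hk⟩⟩
  refine Fintype.mem_piFinset.mpr fun i => mem_Icc.mpr (abs_le.mp ?_)
  have : (k i).natAbs ≤ m := (single_le_sum (fun _ _ => Nat.zero_le _) (mem_univ i)).trans hk
  rw [Int.abs_eq_natAbs]
  exact_mod_cast this

/-- Rankin's trick: each point of the ball has weight `2 ^ (m - ∑ |kᵢ|) ≥ 1`, and the total weight
over the whole box `[-m, m]^ι` factors as a product of geometric sums. -/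
lemma card_integerL1Ball_le (m : ℕ) : #(integerL1Ball ι m) ≤ 2 ^ m * 4 ^ Fintype.card ι := by
  set w : (ι → ℤ) → ℝ := fun k => 2 ^ m * ∏ i, (1 / 2 : ℝ) ^ (k i).natAbs
  have hw : ∀ k ∈ integerL1Ball ι m, 1 ≤ w k := by
    intro k hk
    have hsum := mem_integerL1Ball.mp hk
    simp only [w, prod_pow_eq_pow_sum]
    calc (1 : ℝ) = 2 ^ m * (1 / 2) ^ m := by rw [← mul_pow]; norm_num
      _ ≤ 2 ^ m * (1 / 2) ^ ∑ i, (k i).natAbs := by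
          gcongr 2 ^ m * ?_; exact pow_le_pow_of_le_one (by norm_num) (by norm_num) hsum
  have hbox : ∑ k ∈ Fintype.piFinset (fun _ : ι => Icc (-(m : ℤ)) m), w k
      = 2 ^ m * ∏ _i : ι, ∑ t ∈ Icc (-(m : ℤ)) m, (1 / 2 : ℝ) ^ t.natAbs := by
    rw [← mul_sum, prod_univ_sum]
  have : (#(integerL1Ball ι m) : ℝ) ≤ 2 ^ m * 4 ^ Fintype.card ι :=
    calc (#(integerL1Ball ι m) : ℝ) ≤ ∑ k ∈ integerL1Ball ι m, w k := by
          simpa using card_nsmul_le_sum _ _ _ hw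
      _ ≤ ∑ k ∈ Fintype.piFinset (fun _ : ι => Icc (-(m : ℤ)) m), w k :=
          sum_le_sum_of_subset_of_nonneg (filter_subset _ _) fun _ _ _ => by positivity
      _ ≤ 2 ^ m * 4 ^ Fintype.card ι := by
          rw [hbox, ← card_univ, ← prod_const]
          gcongr with i
          exact sum_Icc_half_pow_natAbs_le m
  exact_mod_cast this

end IntegerL1Ball

lemma Set.MapsTo.exists_finset_transversal {α β : Type*} {φ : α → β} {T : Set α} {K : Finset β}
    (h : Set.MapsTo φ T K) :
    ∃ N : Finset α, ↑N ⊆ T ∧ #N ≤ #K ∧ ∀ y ∈ T, ∃ y' ∈ N, φ y' = φ y := by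
  obtain ⟨S, hST, hbij⟩ := Set.exists_subset_bijOn T φ
  have hfin : S.Finite := Set.Finite.of_finite_image
    (hbij.image_eq ▸ K.finite_toSet.subset h.image_subset) hbij.injOn
  refine ⟨hfin.toFinset, by simpa using hST, card_le_card_of_injOn φ
    (fun a ha => h (hST (by simpa using ha))) (by simpa using hbij.injOn), fun y hy => ?_⟩
  obtain ⟨y', hy', hφ⟩ := hbij.surjOn ⟨y, hy, rfl⟩
  exact ⟨y', by simpa using hy', hφ⟩

section Round

variable {α : Type*} [Field α] [LinearOrder α] [IsStrictOrderedRing α] [FloorRing α]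

lemma abs_sub_le_one_of_round_eq {a b : α} (h : round a = round b) : |a - b| ≤ 1 := by
  have ha := abs_sub_round a
  have hb := abs_sub_round b
  rw [h] at ha
  calc |a - b| = |(a - round b) - (b - round b)| := by ring_nf
    _ ≤ |a - round b| + |b - round b| := abs_sub _ _
    _ ≤ 1 := by linarith

lemma natAbs_round_le (x : α) : ((round x).natAbs : α) ≤ |x| + 1 / 2 := by
  have := abs_sub_round x
  rw [Nat.cast_natAbs, Int.cast_abs]
  linarith [abs_sub_abs_le_abs_sub (round x : α) x, abs_sub_comm (round x : α) x]

end Round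

lemma sum_natAbs_round_sqrt_card_mul_le {ι : Type*} [Fintype ι] (y : ι → ℝ)
    (hy : ∑ i, y i ^ 2 ≤ 1) :
    ∑ i, (round (√(Fintype.card ι) * y i)).natAbs ≤ 2 * Fintype.card ι := by
  set n : ℝ := ↑(Fintype.card ι)
  have hsqrt : √n * √n = n := Real.mul_self_sqrt (Nat.cast_nonneg _)
  have hl1 : ∑ i, |y i| ≤ √n := by
    refine (le_abs_self _).trans (Real.abs_le_sqrt ?_)
    calc (∑ i, |y i|) ^ 2 ≤ #univ * ∑ i, |y i| ^ 2 := sq_sum_le_card_mul_sum_sq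
      _ ≤ n := by simpa [sq_abs] using mul_le_mul_of_nonneg_left hy (Nat.cast_nonneg _)
  have : (∑ i, (round (√n * y i)).natAbs : ℝ) ≤ 2 * n :=
    calc (∑ i, (round (√n * y i)).natAbs : ℝ) ≤ ∑ i, (√n * |y i| + 1 / 2) := by
          gcongr with i
          simpa [abs_mul, abs_of_nonneg (Real.sqrt_nonneg n)] using natAbs_round_le (√n * y i)
      _ = √n * ∑ i, |y i| + n / 2 := by rw [sum_add_distrib, ← mul_sum]; simp [n]; ring
      _ ≤ √n * √n + n / 2 := by gcongr
      _ ≤ 2 * n := by rw [hsqrt]; linarith [Nat.cast_nonneg (α := ℝ) (Fintype.card ι)]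
  simp only [n] at this
  exact_mod_cast this

/-- There is a universal constant `C > 0` such that for any `n` and any
subset `T` of the unit Euclidean sphere in `ℝⁿ`, there is a finite subset `Net ⊆ T` of
cardinality at most `exp (C n)` which is an `n^{-1/2}`-net in `T` for the sup-norm. -/
theorem exists_cube_net_in_sphere_subset :
    ∃ C : ℝ, 0 < C ∧
      ∀ (n : ℕ) (T : Set (Fin n → ℝ)),
        (∀ y ∈ T, Real.sqrt (∑ j, (y j) ^ 2) = 1) →
        ∃ Net : Finset (Fin n → ℝ),
          ↑Net ⊆ T ∧
          (Net.card : ℝ) ≤ Real.exp (C * n) ∧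
          ∀ y ∈ T, ∃ y' ∈ Net, ∀ j, |y j - y' j| ≤ 1 / Real.sqrt n := by
  refine ⟨4 * Real.log 2, by positivity, fun n T hT => ?_⟩
  have hmaps : Set.MapsTo (fun y j => round (√n * y j)) T (integerL1Ball (Fin n) (2 * n)) :=
    fun y hy => mem_integerL1Ball.mpr <| by
      simpa using sum_natAbs_round_sqrt_card_mul_le y (Real.sqrt_eq_one.mp (hT y hy)).le
  obtain ⟨Net, hsub, hcard, hnet⟩ := hmaps.exists_finset_transversal
  refine ⟨Net, hsub, ?_, fun y hy => ?_⟩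
  · calc (#Net : ℝ) ≤ 2 ^ (2 * n) * 4 ^ n := by
          exact_mod_cast hcard.trans (by simpa using card_integerL1Ball_le (ι := Fin n) (2 * n))
      _ = Real.exp (4 * Real.log 2 * n) := by
          have h16 : Real.exp (4 * Real.log 2) = 16 := by
            rw [← Real.log_rpow two_pos, Real.exp_log (by positivity)]
            norm_num
          rw [mul_comm _ (n : ℝ), Real.exp_nat_mul, h16, pow_mul, ← mul_pow]
          norm_num
  · obtain ⟨y', hy', hround⟩ := hnet y hy
    refine ⟨y', hy', fun j => ?_⟩
    have hn : 0 < √(n : ℝ) := Real.sqrt_pos.mpr (by exact_mod_cast j.pos)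
    have := abs_sub_le_one_of_round_eq (congrFun hround j).symm
    rw [← mul_sub, abs_mul, abs_of_pos hn] at this
    rw [le_div_iff₀ hn]
    linarith
end

section
/- For every ε ∈ (0,1] there exist N₀ = N₀(ε) and universal constants C, c > 0 with the following property: if N ≥ N₀ and X = (X₁,…,X_N) is a vector of independent real random variables with E X_i = 0 and E X_i² = 1 for all i, then with probability at least 1 − exp(−cεN) there exists a subset I ⊂ {1,…,N} with |I| ≥ N − εN such that ‖P_I X‖ ≤ C√N. -/
/-!
Truncate the squares: `Y i = min (X i ^ 2 / M) 1` with `M = 4 / ε` are independent,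
`[0, 1]`-valued and have mean at most `ε / 4`, so by Chernoff's bound `∑ Y i ≥ ε N` has
probability at most `exp (-ε N / 2)`. Outside this event fewer than `ε N` coordinates have
`X i ^ 2 > M`, and on the others `∑ X i ^ 2 ≤ M ∑ Y i ≤ 4 N`.
-/

open MeasureTheory ProbabilityTheory Finset

theorem Real.exp_mul_le_one_add_mul_of_mem_Icc (t : ℝ) {x : ℝ} (hx : x ∈ Set.Icc (0 : ℝ) 1) :
    Real.exp (t * x) ≤ 1 + (Real.exp t - 1) * x := by
  have h := convexOn_exp.2 (Set.mem_univ 0) (Set.mem_univ t) (sub_nonneg.2 hx.2) hx.1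
    (sub_add_cancel 1 x)
  simp only [smul_eq_mul, mul_zero, zero_add, Real.exp_zero, mul_one] at h
  rw [mul_comm]
  linarith

theorem Finset.exists_card_ge_sum_le_sum_min_one {ι : Type*} [Fintype ι] (y : ι → ℝ)
    (hy : ∀ i, 0 ≤ y i) :
    ∃ I : Finset ι, (Fintype.card ι : ℝ) - ∑ i, min (y i) 1 ≤ #I ∧
      ∑ i ∈ I, y i ≤ ∑ i, min (y i) 1 := by
  classical
  set I := univ.filter fun i => y i ≤ 1
  set J := univ.filter fun i => ¬y i ≤ 1
  have hsplit : ∑ i, min (y i) 1 = ∑ i ∈ I, y i + #J := by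
    rw [← sum_filter_add_sum_filter_not univ (fun i => y i ≤ 1)]
    congr 1
    · exact sum_congr rfl fun i hi => min_eq_left (mem_filter.1 hi).2
    · rw [sum_congr rfl fun i (hi : i ∈ J) => min_eq_right (le_of_not_ge (mem_filter.1 hi).2)]
      simp
  have hcard : (#I : ℝ) + #J = Fintype.card ι := by
    exact_mod_cast card_filter_add_card_filter_not (s := univ) (p := fun i => y i ≤ 1)
  have hI : 0 ≤ ∑ i ∈ I, y i := sum_nonneg fun i _ => hy i
  exact ⟨I, by linarith, by linarith⟩

theorem Finset.exists_card_ge_sum_sq_le {ι : Type*} [Fintype ι] (x : ι → ℝ) {M K : ℝ}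
    (hM : 0 < M) (hK : ∑ i, min (x i ^ 2 / M) 1 ≤ K) :
    ∃ I : Finset ι, (Fintype.card ι : ℝ) - K ≤ #I ∧ ∑ i ∈ I, x i ^ 2 ≤ M * K := by
  obtain ⟨I, hcard, hsum⟩ :=
    exists_card_ge_sum_le_sum_min_one (fun i => x i ^ 2 / M) fun i => by positivity
  refine ⟨I, by linarith, ?_⟩
  rw [← sum_div, div_le_iff₀ hM] at hsum
  nlinarith

section Chernoff

variable {Ω ι : Type*} [MeasurableSpace Ω] {μ : Measure Ω} [IsProbabilityMeasure μ]

theorem mgf_le_exp_mul_integral_of_mem_Icc {Y : Ω → ℝ} (hY : Measurable Y)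
    (hY01 : ∀ ω, Y ω ∈ Set.Icc (0 : ℝ) 1) (t : ℝ) :
    mgf Y μ t ≤ Real.exp ((Real.exp t - 1) * μ[Y]) := by
  have hYint : Integrable Y μ :=
    .of_bound hY.aestronglyMeasurable 1 (.of_forall fun ω => by
      rw [Real.norm_of_nonneg (hY01 ω).1]; exact (hY01 ω).2)
  calc mgf Y μ t = μ[fun ω => Real.exp (t * Y ω)] := rfl
    _ ≤ μ[fun ω => 1 + (Real.exp t - 1) * Y ω] :=
      integral_mono_of_nonneg (.of_forall fun _ => (Real.exp_pos _).le)
        ((integrable_const 1).add (hYint.const_mul _))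
        (.of_forall fun ω => Real.exp_mul_le_one_add_mul_of_mem_Icc t (hY01 ω))
    _ = 1 + (Real.exp t - 1) * μ[Y] := by
      rw [integral_add (integrable_const 1) (hYint.const_mul _), integral_const_mul]
      simp
    _ ≤ Real.exp ((Real.exp t - 1) * μ[Y]) := by
      linarith [Real.add_one_le_exp ((Real.exp t - 1) * μ[Y])]

variable [Fintype ι]

theorem measure_le_sum_le_exp_of_mem_Icc {Y : ι → Ω → ℝ} (hindep : iIndepFun Y μ)
    (hY : ∀ i, Measurable (Y i)) (hY01 : ∀ i ω, Y i ω ∈ Set.Icc (0 : ℝ) 1) {t : ℝ} (ht : 0 ≤ t)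
    (a : ℝ) :
    μ.real {ω | a ≤ ∑ i, Y i ω} ≤ Real.exp (-t * a + (Real.exp t - 1) * ∑ i, μ[Y i]) := by
  have hint : Integrable (fun ω => Real.exp (t * (∑ i, Y i) ω)) μ := by
    simp only [Finset.sum_apply]
    refine .of_bound (by fun_prop) (Real.exp (t * Fintype.card ι)) (.of_forall fun ω => ?_)
    rw [Real.norm_of_nonneg (Real.exp_pos _).le, Real.exp_le_exp]
    gcongr
    simpa using Finset.sum_le_sum fun i (_ : i ∈ univ) => (hY01 i ω).2
  calc μ.real {ω | a ≤ ∑ i, Y i ω} = μ.real {ω | a ≤ (∑ i, Y i) ω} := by simp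
    _ ≤ Real.exp (-t * a) * mgf (∑ i, Y i) μ t := measure_ge_le_exp_mul_mgf a ht hint
    _ = Real.exp (-t * a) * ∏ i, mgf (Y i) μ t := by rw [hindep.mgf_sum hY]
    _ ≤ Real.exp (-t * a) * ∏ i, Real.exp ((Real.exp t - 1) * μ[Y i]) := by
      gcongr with i
      · exact fun i _ => mgf_nonneg
      · exact mgf_le_exp_mul_integral_of_mem_Icc (hY i) (hY01 i) t
    _ = Real.exp (-t * a + (Real.exp t - 1) * ∑ i, μ[Y i]) := by
      rw [← Real.exp_sum, ← Real.exp_add, Finset.mul_sum]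

theorem measure_le_sum_min_sq_div_le_exp {X : ι → Ω → ℝ} (hindep : iIndepFun X μ)
    (hX : ∀ i, Measurable (X i)) (hX2 : ∀ i, Integrable (fun ω => X i ω ^ 2) μ)
    (hvar : ∀ i, ∫ ω, X i ω ^ 2 ∂μ ≤ 1) {M : ℝ} (hM : 0 ≤ M) (a : ℝ) :
    μ.real {ω | a ≤ ∑ i, min (X i ω ^ 2 / M) 1} ≤
      Real.exp (-a + (Real.exp 1 - 1) * (Fintype.card ι / M)) := by
  set Y : ι → Ω → ℝ := fun i ω => min (X i ω ^ 2 / M) 1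
  have hY : ∀ i, Measurable (Y i) := fun i => by fun_prop
  have hY01 : ∀ i ω, Y i ω ∈ Set.Icc (0 : ℝ) 1 := fun i ω => ⟨by positivity, min_le_right _ _⟩
  have hEY : ∀ i, μ[Y i] ≤ 1 / M := fun i =>
    calc μ[Y i] ≤ ∫ ω, X i ω ^ 2 / M ∂μ :=
          integral_mono (.of_bound (hY i).aestronglyMeasurable 1 (.of_forall fun ω => by
            rw [Real.norm_of_nonneg (hY01 i ω).1]; exact (hY01 i ω).2))
            ((hX2 i).div_const _) fun ω => min_le_left _ _
      _ ≤ 1 / M := by rw [integral_div]; gcongr; exact hvar i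
  have hsum : ∑ i, μ[Y i] ≤ Fintype.card ι / M := by
    calc ∑ i, μ[Y i] ≤ ∑ _i : ι, 1 / M := sum_le_sum fun i _ => hEY i
      _ = Fintype.card ι / M := by rw [sum_const, card_univ, nsmul_eq_mul, mul_one_div]
  have he : 0 ≤ Real.exp 1 - 1 := by linarith [Real.add_one_le_exp 1]
  calc μ.real {ω | a ≤ ∑ i, Y i ω} ≤ Real.exp (-1 * a + (Real.exp 1 - 1) * ∑ i, μ[Y i]) :=
        measure_le_sum_le_exp_of_mem_Icc
          (hindep.comp (fun _ x => min (x ^ 2 / M) 1) fun _ => by fun_prop) hY hY01 zero_le_one a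
    _ ≤ _ := by rw [neg_one_mul]; gcongr

end Chernoff

/-- (Lemma 3.1.) For every `ε ∈ (0,1]` there is `N₀ = N₀(ε)` and
universal constants `C, c > 0` such that for `N ≥ N₀` and independent random variables
`X₁,…,X_N` with zero mean and unit variance, with probability at least
`1 − exp(−cεN)` there is `I ⊆ {1,…,N}` with `|I| ≥ N − εN` and `‖P_I X‖ ≤ C√N`. -/
theorem min_coordinate_projection_bound :
    ∃ C c : ℝ, 0 < C ∧ 0 < c ∧
      ∀ ε : ℝ, 0 < ε → ε ≤ 1 →
        ∃ N₀ : ℕ, ∀ N : ℕ, N₀ ≤ N →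
          ∀ (Ω : Type) [MeasureSpace Ω] [IsProbabilityMeasure (ℙ : Measure Ω)]
            (X : Fin N → Ω → ℝ),
            (∀ i, Measurable (X i)) →
            iIndepFun X ℙ →
            (∀ i, ∫ ω, X i ω = 0) →
            (∀ i, ∫ ω, (X i ω) ^ 2 = 1) →
            1 - ENNReal.ofReal (Real.exp (-(c * ε * N))) ≤
              ℙ {ω | ∃ I : Finset (Fin N), (N : ℝ) - ε * N ≤ I.card ∧
                    Real.sqrt (∑ i ∈ I, (X i ω) ^ 2) ≤ C * Real.sqrt N} := by
  refine ⟨2, 1 / 2, two_pos, one_half_pos,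
    fun ε hε _ => ⟨0, fun N _ Ω _ _ X hX hindep _ hvar => ?_⟩⟩
  set bad := {ω | ε * N ≤ ∑ i, min (X i ω ^ 2 / (4 / ε)) 1}
  have hbad : (ℙ : Measure Ω).real bad ≤ Real.exp (-(1 / 2 * ε * N)) := by
    refine (measure_le_sum_min_sq_div_le_exp hindep hX
      (fun i => .of_integral_ne_zero (by simp [hvar])) (fun i => (hvar i).le) (by positivity)
      _).trans (Real.exp_le_exp.2 ?_)
    have he : Real.exp 1 - 1 ≤ 2 := by linarith [Real.exp_one_lt_d9]
    simp only [Fintype.card_fin, div_div_eq_mul_div]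
    nlinarith [mul_le_mul_of_nonneg_right he (by positivity : (0 : ℝ) ≤ N * ε / 4)]
  have hgood : badᶜ ⊆ {ω | ∃ I : Finset (Fin N), (N : ℝ) - ε * N ≤ I.card ∧
      Real.sqrt (∑ i ∈ I, (X i ω) ^ 2) ≤ 2 * Real.sqrt N} := fun ω hω => by
    obtain ⟨I, hcard, hsum⟩ :=
      exists_card_ge_sum_sq_le (X · ω) (by positivity : 0 < 4 / ε) (le_of_lt (not_le.1 hω))
    refine ⟨I, by simpa using hcard, ?_⟩
    calc Real.sqrt (∑ i ∈ I, X i ω ^ 2) ≤ Real.sqrt (2 ^ 2 * N) :=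
          Real.sqrt_le_sqrt (hsum.trans_eq (by field_simp; ring))
      _ = 2 * Real.sqrt N := by rw [Real.sqrt_mul (by positivity), Real.sqrt_sq zero_le_two]
  calc 1 - ENNReal.ofReal (Real.exp (-(1 / 2 * ε * N)))
      ≤ 1 - ℙ bad := tsub_le_tsub_left (by rw [← ofReal_measureReal]; gcongr) 1
    _ = ℙ badᶜ := (prob_compl_eq_one_sub (measurableSet_le measurable_const (by fun_prop))).symm
    _ ≤ _ := measure_mono hgood
end

section
/- For every K > 0 there exists L = L(K) > 0 with the following property. Let N ≥ n, let A = (a_{ij}) be an N×n random matrix with i.i.d. symmetrically distributed entries of unit variance, and for y ∈ S^{n-1} define the random set I_y = {i ≤ N : Σ_{j=1}^n a_{ij}² y_j² ≤ 2}. Then for every fixed y ∈ S^{n-1}, P(‖P_{I_y} A y‖ ≥ L√N) ≤ exp(−KN). -/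
open MeasureTheory ProbabilityTheory Finset

/-!
Symmetric independent entries may be multiplied by independent random signs without changing
their joint law, and the signs do not affect `I_y`. For a row `i ∈ I_y` the signed sum
`∑_j ε_j a_{ij} y_j` is sub-Gaussian with variance proxy `∑_j a_{ij}² y_j² ≤ 2`: writing
`exp (s² / 8)` as a Gaussian average of `exp (s u / 2)` and using `cosh t ≤ exp (t² / 2)`, the
sign average of `exp ((∑_j ε_j a_{ij} y_j)² / 8)` is at most `√2`. The rows carry independent
signs, so `E exp (‖P_{I_y} A y‖² / 8) ≤ √2 ^ N`, and Markov's inequality with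
`L = √(8 (K + 1))` gives the bound because `√2 ≤ e`.
-/

open Real
open scoped ENNReal

def boolSign (b : Bool) : ℝ := if b then 1 else -1

def signFlip {P : Type*} (ε : P → Bool) (x : P → ℝ) : P → ℝ :=
  fun p ↦ boolSign (ε p) * x p

@[simp] lemma boolSign_true : boolSign true = 1 := rfl
@[simp] lemma boolSign_false : boolSign false = -1 := rfl

@[simp] lemma boolSign_sq (b : Bool) : boolSign b ^ 2 = 1 := by cases b <;> norm_num

lemma sum_exp_boolSign_mul (x : ℝ) : ∑ b : Bool, exp (boolSign b * x) = 2 * cosh x := by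
  simp [cosh_eq]; ring

section Hoeffding

variable {κ : Type*} [Fintype κ] [DecidableEq κ]

lemma sum_signs_exp_sum_le (c : κ → ℝ) :
    ∑ ε : κ → Bool, exp (∑ j, boolSign (ε j) * c j) ≤
      2 ^ Fintype.card κ * exp ((∑ j, c j ^ 2) / 2) := by
  calc ∑ ε : κ → Bool, exp (∑ j, boolSign (ε j) * c j)
      = ∏ j, ∑ b : Bool, exp (boolSign b * c j) := by
        simp only [exp_sum, Fintype.prod_sum]
    _ ≤ ∏ j, 2 * exp (c j ^ 2 / 2) := by
        gcongr with j
        rw [sum_exp_boolSign_mul]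
        gcongr
        exact cosh_le_exp_half_sq _
    _ = 2 ^ Fintype.card κ * exp ((∑ j, c j ^ 2) / 2) := by
        rw [prod_mul_distrib, prod_const, card_univ, ← exp_sum, sum_div]

lemma exp_mul_sub_sq_div_two_eq (a u : ℝ) :
    exp (a * u - u ^ 2 / 2) = exp (a ^ 2 / 2) * exp (-(1 / 2) * (u - a) ^ 2) := by
  rw [← exp_add]; ring_nf

lemma integrable_exp_mul_sub_sq_div_two (a : ℝ) :
    Integrable fun u ↦ exp (a * u - u ^ 2 / 2) := by
  simp_rw [exp_mul_sub_sq_div_two_eq a]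
  exact ((integrable_exp_neg_mul_sq one_half_pos).comp_sub_right a).const_mul _

lemma integral_exp_mul_sub_sq_div_two (a : ℝ) :
    ∫ u, exp (a * u - u ^ 2 / 2) = √(2 * π) * exp (a ^ 2 / 2) := by
  simp_rw [exp_mul_sub_sq_div_two_eq a]
  rw [integral_const_mul, integral_sub_right_eq_self (fun v ↦ exp (-(1 / 2) * v ^ 2)) a,
    integral_gaussian, show π / (1 / 2) = 2 * π by ring, mul_comm]

lemma sum_signs_exp_mul_sub_sq_div_two_le (c : κ → ℝ) (hc : ∑ j, c j ^ 2 ≤ 2) (u : ℝ) :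
    ∑ ε : κ → Bool, exp ((∑ j, boolSign (ε j) * c j) / 2 * u - u ^ 2 / 2) ≤
      2 ^ Fintype.card κ * exp (-(1 / 4) * u ^ 2) := by
  have hsplit : ∀ ε : κ → Bool, exp ((∑ j, boolSign (ε j) * c j) / 2 * u - u ^ 2 / 2) =
      exp (∑ j, boolSign (ε j) * (c j * (u / 2))) * exp (-(u ^ 2 / 2)) := fun ε ↦ by
    rw [← exp_add, sub_eq_add_neg, sum_div, sum_mul]
    congr 2
    exact sum_congr rfl fun j _ ↦ by ring
  have hvar : (∑ j, (c j * (u / 2)) ^ 2) / 2 ≤ u ^ 2 / 4 := by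
    have : (∑ j, (c j * (u / 2)) ^ 2) / 2 = u ^ 2 / 8 * ∑ j, c j ^ 2 := by
      rw [mul_sum, sum_div]; exact sum_congr rfl fun j _ ↦ by ring
    rw [this]
    nlinarith [sq_nonneg u]
  calc ∑ ε : κ → Bool, exp ((∑ j, boolSign (ε j) * c j) / 2 * u - u ^ 2 / 2)
      = (∑ ε : κ → Bool, exp (∑ j, boolSign (ε j) * (c j * (u / 2)))) *
          exp (-(u ^ 2 / 2)) := by
        simp only [hsplit, sum_mul]
    _ ≤ 2 ^ Fintype.card κ * exp (u ^ 2 / 4) * exp (-(u ^ 2 / 2)) := by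
        gcongr
        exact (sum_signs_exp_sum_le _).trans
          (mul_le_mul_of_nonneg_left (exp_le_exp.2 hvar) (by positivity))
    _ = 2 ^ Fintype.card κ * exp (-(1 / 4) * u ^ 2) := by
        rw [mul_assoc, ← exp_add]; ring_nf

lemma sum_signs_exp_sq_div_eight_le (c : κ → ℝ) (hc : ∑ j, c j ^ 2 ≤ 2) :
    ∑ ε : κ → Bool, exp ((∑ j, boolSign (ε j) * c j) ^ 2 / 8) ≤
      2 ^ Fintype.card κ * √2 := by
  set X : (κ → Bool) → ℝ := fun ε ↦ ∑ j, boolSign (ε j) * c j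
  have h2π : √(2 * π) ≠ 0 := by positivity
  -- `exp (s ^ 2 / 8)` is the standard Gaussian average of `exp (s u / 2)`.
  calc ∑ ε, exp (X ε ^ 2 / 8)
      = (√(2 * π))⁻¹ * ∫ u, ∑ ε, exp (X ε / 2 * u - u ^ 2 / 2) := by
        rw [integral_finsetSum _ fun ε _ ↦ integrable_exp_mul_sub_sq_div_two _, mul_sum]
        refine sum_congr rfl fun ε _ ↦ ?_
        rw [integral_exp_mul_sub_sq_div_two]
        field_simp
        ring_nf
    _ ≤ (√(2 * π))⁻¹ * ∫ u, 2 ^ Fintype.card κ * exp (-(1 / 4) * u ^ 2) := by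
        refine mul_le_mul_of_nonneg_left ?_ (by positivity)
        exact integral_mono
          (integrable_finsetSum _ fun ε _ ↦ integrable_exp_mul_sub_sq_div_two _)
          ((integrable_exp_neg_mul_sq (by norm_num)).const_mul _)
          (sum_signs_exp_mul_sub_sq_div_two_le c hc)
    _ = 2 ^ Fintype.card κ * √2 := by
        rw [integral_const_mul, integral_gaussian, show π / (1 / 4) = 2 * (2 * π) by ring,
          sqrt_mul zero_le_two (2 * π), mul_comm √2, mul_left_comm, inv_mul_cancel_left₀ h2π]

end Hoeffding

section Projection

variable {ι κ : Type*} [Fintype ι] [Fintype κ]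

lemma sum_signs_exp_sum_sq_div_eight_le [DecidableEq ι] [DecidableEq κ] (c : ι → κ → ℝ)
    (hc : ∀ i, ∑ j, c i j ^ 2 ≤ 2) :
    ∑ ε : ι → κ → Bool, exp ((∑ i, (∑ j, boolSign (ε i j) * c i j) ^ 2) / 8) ≤
      (2 ^ Fintype.card κ * √2) ^ Fintype.card ι := by
  calc ∑ ε : ι → κ → Bool, exp ((∑ i, (∑ j, boolSign (ε i j) * c i j) ^ 2) / 8)
      = ∏ i, ∑ v : κ → Bool, exp ((∑ j, boolSign (v j) * c i j) ^ 2 / 8) := by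
        simp only [sum_div, exp_sum, Fintype.prod_sum]
    _ ≤ ∏ _i : ι, (2 ^ Fintype.card κ * √2) :=
        prod_le_prod (fun i _ ↦ by positivity) fun i _ ↦ sum_signs_exp_sq_div_eight_le _ (hc i)
    _ = (2 ^ Fintype.card κ * √2) ^ Fintype.card ι := by rw [prod_const, card_univ]

/-- `‖P_{I_y} x y‖²` for the matrix `x` with rows indexed by `ι`. -/
noncomputable def projectedSqNorm (y : κ → ℝ) (x : ι × κ → ℝ) : ℝ :=
  ∑ i ∈ univ.filter (fun i ↦ ∑ j, x (i, j) ^ 2 * y j ^ 2 ≤ 2), (∑ j, x (i, j) * y j) ^ 2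

lemma projectedSqNorm_signFlip (y : κ → ℝ) (x : ι × κ → ℝ) (ε : ι × κ → Bool) :
    projectedSqNorm y (signFlip ε x) = ∑ i, (∑ j, boolSign (ε (i, j)) *
      if ∑ j, x (i, j) ^ 2 * y j ^ 2 ≤ 2 then x (i, j) * y j else 0) ^ 2 := by
  simp only [projectedSqNorm, signFlip, mul_pow, boolSign_sq, one_mul, sum_filter]
  refine sum_congr rfl fun i _ ↦ ?_
  split_ifs <;> simp [mul_assoc]

lemma sum_signFlip_exp_projectedSqNorm_le [DecidableEq ι] [DecidableEq κ] (y : κ → ℝ)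
    (x : ι × κ → ℝ) :
    ∑ ε : ι × κ → Bool, exp (projectedSqNorm y (signFlip ε x) / 8) ≤
      2 ^ Fintype.card (ι × κ) * √2 ^ Fintype.card ι := by
  -- Rows outside `I_y` are replaced by zero rows; flipping signs does not change `I_y`.
  set c : ι → κ → ℝ := fun i j ↦
    if ∑ j, x (i, j) ^ 2 * y j ^ 2 ≤ 2 then x (i, j) * y j else 0
  have hc : ∀ i, ∑ j, c i j ^ 2 ≤ 2 := fun i ↦ by
    by_cases h : ∑ j, x (i, j) ^ 2 * y j ^ 2 ≤ 2
    · simpa only [c, if_pos h, mul_pow] using h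
    · simp [c, h]
  calc ∑ ε : ι × κ → Bool, exp (projectedSqNorm y (signFlip ε x) / 8)
      = ∑ ε : ι → κ → Bool, exp ((∑ i, (∑ j, boolSign (ε i j) * c i j) ^ 2) / 8) := by
        simp only [projectedSqNorm_signFlip]
        exact Fintype.sum_equiv (Equiv.curry ι κ Bool) _ _ fun ε ↦ rfl
    _ ≤ (2 ^ Fintype.card κ * √2) ^ Fintype.card ι := sum_signs_exp_sum_sq_div_eight_le c hc
    _ = 2 ^ Fintype.card (ι × κ) * √2 ^ Fintype.card ι := by
        rw [mul_pow, ← pow_mul, Fintype.card_prod, mul_comm (Fintype.card κ)]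

lemma projectedSqNorm_nonneg (y : κ → ℝ) (x : ι × κ → ℝ) : 0 ≤ projectedSqNorm y x :=
  sum_nonneg fun _ _ ↦ sq_nonneg _

@[fun_prop]
lemma measurable_projectedSqNorm (y : κ → ℝ) :
    Measurable fun x : ι × κ → ℝ ↦ projectedSqNorm y x := by
  simp only [projectedSqNorm, sum_filter]
  refine Finset.measurable_sum _ fun i _ ↦ Measurable.ite ?_ (by fun_prop) measurable_const
  exact measurableSet_le (by fun_prop) measurable_const

end Projection

section Symmetrization

variable {Ω P : Type*} [MeasurableSpace Ω] {μ : Measure Ω} [Fintype P] {a : P → Ω → ℝ}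

lemma identDistrib_signFlip (ha : ∀ p, AEMeasurable (a p) μ) (hindep : iIndepFun a μ)
    (hsymm : ∀ p, IdentDistrib (a p) (fun ω ↦ -a p ω) μ μ) (ε : P → Bool) :
    IdentDistrib (fun ω ↦ signFlip ε fun p ↦ a p ω) (fun ω p ↦ a p ω) μ μ where
  aemeasurable_fst := aemeasurable_pi_lambda _ fun p ↦ (ha p).const_mul _
  aemeasurable_snd := aemeasurable_pi_lambda _ ha
  map_eq := by
    have hflip : iIndepFun (fun p ω ↦ boolSign (ε p) * a p ω) μ :=
      hindep.comp (fun p x ↦ boolSign (ε p) * x) fun p ↦ measurable_const_mul _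
    have hmarginal : ∀ p, μ.map (fun ω ↦ boolSign (ε p) * a p ω) = μ.map (a p) :=
      fun p ↦ by
      cases ε p
      · simpa using (hsymm p).map_eq.symm
      · simp
    change μ.map (fun ω p ↦ boolSign (ε p) * a p ω) = _
    rw [hflip.map_fun_eq_pi_map fun p ↦ (ha p).const_mul _,
      hindep.map_fun_eq_pi_map ha, funext hmarginal]

lemma lintegral_le_of_sum_signFlip_le [DecidableEq P] (ha : ∀ p, AEMeasurable (a p) μ)
    (hindep : iIndepFun a μ) (hsymm : ∀ p, IdentDistrib (a p) (fun ω ↦ -a p ω) μ μ)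
    {F : (P → ℝ) → ℝ≥0∞} (hF : Measurable F) {B : ℝ≥0∞}
    (hB : ∀ x, ∑ ε : P → Bool, F (signFlip ε x) ≤ 2 ^ Fintype.card P * B) :
    ∫⁻ ω, F (fun p ↦ a p ω) ∂μ ≤ B := by
  have := hindep.isProbabilityMeasure
  have hsum : ∫⁻ ω, ∑ ε : P → Bool, F (signFlip ε fun p ↦ a p ω) ∂μ =
      2 ^ Fintype.card P * ∫⁻ ω, F (fun p ↦ a p ω) ∂μ := calc
    _ = ∑ ε : P → Bool, ∫⁻ ω, F (signFlip ε fun p ↦ a p ω) ∂μ :=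
      lintegral_finsetSum' _ fun ε _ ↦
        ((identDistrib_signFlip ha hindep hsymm ε).comp hF).aemeasurable_fst
    _ = ∑ _ε : P → Bool, ∫⁻ ω, F (fun p ↦ a p ω) ∂μ :=
      sum_congr rfl fun ε _ ↦ ((identDistrib_signFlip ha hindep hsymm ε).comp hF).lintegral_eq
    _ = _ := by simp
  rw [← ENNReal.mul_le_mul_iff_right (pow_ne_zero _ two_ne_zero)
    (ENNReal.pow_ne_top ENNReal.ofNat_ne_top), ← hsum]
  calc ∫⁻ ω, ∑ ε : P → Bool, F (signFlip ε fun p ↦ a p ω) ∂μ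
      ≤ ∫⁻ _, 2 ^ Fintype.card P * B ∂μ := lintegral_mono fun ω ↦ hB _
    _ = 2 ^ Fintype.card P * B := by simp

end Symmetrization

lemma lintegral_exp_projectedSqNorm_le {Ω ι κ : Type*} [MeasurableSpace Ω] {μ : Measure Ω}
    [Fintype ι] [Fintype κ] [DecidableEq ι] [DecidableEq κ] {a : ι × κ → Ω → ℝ}
    (ha : ∀ p, AEMeasurable (a p) μ) (hindep : iIndepFun a μ)
    (hsymm : ∀ p, IdentDistrib (a p) (fun ω ↦ -a p ω) μ μ) (y : κ → ℝ) :
    ∫⁻ ω, ENNReal.ofReal (exp (projectedSqNorm y (fun p ↦ a p ω) / 8)) ∂μ ≤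
      ENNReal.ofReal (√2 ^ Fintype.card ι) := by
  refine lintegral_le_of_sum_signFlip_le
    (F := fun x ↦ ENNReal.ofReal (exp (projectedSqNorm y x / 8))) ha hindep hsymm (by fun_prop)
    fun x ↦ ?_
  rw [← ENNReal.ofReal_sum_of_nonneg fun _ _ ↦ (exp_pos _).le]
  calc _ ≤ ENNReal.ofReal (2 ^ Fintype.card (ι × κ) * √2 ^ Fintype.card ι) :=
        ENNReal.ofReal_le_ofReal (sum_signFlip_exp_projectedSqNorm_le y x)
    _ = _ := by
        rw [ENNReal.ofReal_mul (by positivity), ENNReal.ofReal_pow zero_le_two,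
          ENNReal.ofReal_ofNat]

lemma sqrt_two_pow_div_exp_le (K : ℝ) (N : ℕ) :
    √2 ^ N / exp ((K + 1) * N) ≤ exp (-(K * N)) := by
  have hsqrt : √2 ≤ exp 1 := sqrt_le_iff.2 ⟨(exp_pos 1).le, by nlinarith [add_one_le_exp 1]⟩
  rw [div_le_iff₀ (exp_pos _), ← exp_add, show -(K * N) + (K + 1) * N = (N : ℝ) * 1 by ring,
    exp_nat_mul]
  gcongr

lemma measure_sqrt_ge_le_of_lintegral_exp_le {Ω : Type*} [MeasurableSpace Ω] {μ : Measure Ω}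
    {Q : Ω → ℝ} (hQ : Measurable Q) (hQ0 : ∀ ω, 0 ≤ Q ω) (K : ℝ) (N : ℕ)
    (hmoment : ∫⁻ ω, ENNReal.ofReal (exp (Q ω / 8)) ∂μ ≤ ENNReal.ofReal (√2 ^ N)) :
    μ {ω | √(8 * (K + 1)) * √N ≤ √(Q ω)} ≤ ENNReal.ofReal (exp (-(K * N))) := by
  set t := ENNReal.ofReal (exp ((K + 1) * N))
  have hsub :
      {ω | √(8 * (K + 1)) * √N ≤ √(Q ω)} ⊆ {ω | t ≤ ENNReal.ofReal (exp (Q ω / 8))} :=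
    fun ω hω ↦ by
      rw [Set.mem_ofPred_eq, ← sqrt_mul' _ (Nat.cast_nonneg N),
        sqrt_le_sqrt_iff (hQ0 ω)] at hω
      exact ENNReal.ofReal_le_ofReal (exp_le_exp.2 (by linarith))
  calc μ {ω | √(8 * (K + 1)) * √N ≤ √(Q ω)}
      ≤ μ {ω | t ≤ ENNReal.ofReal (exp (Q ω / 8))} := measure_mono hsub
    _ ≤ (∫⁻ ω, ENNReal.ofReal (exp (Q ω / 8)) ∂μ) / t :=
        meas_ge_le_lintegral_div (by fun_prop) (by simp [t, exp_pos]) ENNReal.ofReal_ne_top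
    _ ≤ ENNReal.ofReal (√2 ^ N) / t := by gcongr
    _ ≤ ENNReal.ofReal (exp (-(K * N))) := by
        rw [← ENNReal.ofReal_div_of_pos (exp_pos _)]
        exact ENNReal.ofReal_le_ofReal (sqrt_two_pow_div_exp_le K N)

/-- (Lemma 3.2.) For every `K > 0` there is `L = L(K) > 0` with the
following property: if `A = (a_{ij})` is an `N×n` random matrix (`N ≥ n`) with i.i.d.
symmetrically distributed entries of unit variance, and for a fixed unit vector
`y ∈ S^{n-1}` we set `I_y = {i : ∑_j a_{ij}² y_j² ≤ 2}`, then
`P(‖P_{I_y} A y‖ ≥ L √N) ≤ exp(−KN)`. -/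
theorem projected_matrix_vector_bound_symmetric :
    ∀ K : ℝ, 0 < K →
      ∃ L : ℝ, 0 < L ∧
        ∀ (N n : ℕ), n ≤ N →
          ∀ (Ω : Type) [MeasureSpace Ω] [IsProbabilityMeasure (ℙ : Measure Ω)]
            (ξ : Ω → ℝ) (a : Fin N × Fin n → Ω → ℝ),
            Measurable ξ →
            IdentDistrib ξ (fun ω => -ξ ω) ℙ ℙ →
            (∫ ω, (ξ ω) ^ 2 = 1) →
            (∀ p, Measurable (a p)) →
            iIndepFun a ℙ →
            (∀ p, IdentDistrib (a p) ξ ℙ ℙ) →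
            ∀ (y : Fin n → ℝ), (∑ j, (y j) ^ 2 = 1) →
              ℙ {ω | L * Real.sqrt N ≤
                    Real.sqrt (∑ i ∈ Finset.univ.filter
                        (fun i : Fin N => ∑ j, (a (i, j) ω) ^ 2 * (y j) ^ 2 ≤ 2),
                      (∑ j, a (i, j) ω * y j) ^ 2)} ≤
                ENNReal.ofReal (Real.exp (-(K * N))) := by
  intro K hK
  refine ⟨√(8 * (K + 1)), by positivity, ?_⟩
  intro N n _ Ω _ _ ξ a _ hξsymm _ ha hindep haξ y _
  have hsymm : ∀ p, IdentDistrib (a p) (fun ω ↦ -a p ω) ℙ ℙ := fun p ↦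
    ((haξ p).trans hξsymm).trans ((haξ p).comp measurable_neg).symm
  have hmoment := lintegral_exp_projectedSqNorm_le (fun p ↦ (ha p).aemeasurable) hindep hsymm y
  rw [Fintype.card_fin] at hmoment
  have hQ : Measurable fun ω ↦ projectedSqNorm y fun p ↦ a p ω := by fun_prop
  exact measure_sqrt_ge_le_of_lintegral_exp_le hQ (fun _ ↦ projectedSqNorm_nonneg y _) K N
    hmoment
end

section
/- Let ξ be a symmetrically distributed random variable with E ξ² = 1. For every ε > 0 and K > 0 there exists δ > 0 (depending on ε, K and the distribution of ξ) such that: whenever N ≥ n, A = (a_{ij}) is an N×n matrix of i.i.d. copies of ξ, and y ∈ S^{n-1} satisfies ‖y‖_∞ ≤ δ, the random set I_y = {i ≤ N : Σ_j a_{ij}² y_j² ≤ 2} satisfies P(|I_y| ≤ N − εN) ≤ exp(−KN). -/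
/-!
Write `w_j = y_j²` and split `a_{ij}² = min (a_{ij}², M) + (a_{ij}² - min (a_{ij}², M))`. The
bounded part of the row sum `∑_j a_{ij}² w_j` has mean at most `1` and variance at most
`M · max_j w_j ≤ M δ²`, so by Chebyshev it exceeds `3/2` with small probability; the excess part
has mean `E (ξ² - min (ξ², M))`, small for large `M` by dominated convergence, so by Markov it
exceeds `1/2` with small probability. Hence for small `δ` each row event `∑_j a_{ij}² w_j > 2` has
probability at most `p = exp (-(K + 1) / ε)`. The rows are independent, so at least `⌈εN⌉` of
these events occur with probability at most `C(N, ⌈εN⌉) p^⌈εN⌉ ≤ 2^N e^{-(K+1)N} ≤ e^{-KN}`.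
-/

open MeasureTheory ProbabilityTheory Finset Filter Topology
open scoped ENNReal

namespace ProbabilityTheory

theorem iIndepFun.curry {Ω ι κ β : Type*} [MeasurableSpace Ω] {μ : Measure Ω} [Fintype κ]
    [MeasurableSpace β] {f : ι × κ → Ω → β} (hf : ∀ p, Measurable (f p)) (h : iIndepFun f μ) :
    iIndepFun (fun i ω j => f (i, j) ω) μ := by
  classical
  have := h.isProbabilityMeasure
  rw [iIndepFun_iff_measure_inter_preimage_eq_mul]
  intro S B hB
  induction S using Finset.induction_on with
  | empty => simp
  | @insert k s hk ih =>
    rw [prod_insert hk, ← ih fun i hi => hB i (mem_insert_of_mem hi), set_biInter_insert]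
    have hdisj : Disjoint ({k} ×ˢ univ : Finset (ι × κ)) (s ×ˢ univ) :=
      disjoint_product.2 (.inl (disjoint_singleton_left.2 hk))
    have hind := (h.indepFun_finset _ _ hdisj hf).comp
      (φ := fun v j => v ⟨(k, j), mem_product.2 ⟨mem_singleton_self k, mem_univ j⟩⟩)
      (ψ := fun v (i : s) j => v ⟨(i, j), mem_product.2 ⟨i.2, mem_univ j⟩⟩)
      (by fun_prop) (by fun_prop)
    convert hind.measure_inter_preimage_eq_mul (B k) (Set.univ.pi fun i : s => B i)
      (hB k (mem_insert_self k s)) (.univ_pi fun i => hB i (mem_insert_of_mem i.2)) using 3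
    all_goals ext ω; simp

end ProbabilityTheory

section WeightedSums

variable {Ω ι : Type*} [MeasurableSpace Ω] {μ : Measure Ω} [Fintype ι]

theorem integral_sum_mul_le {V : ι → Ω → ℝ} (hV : ∀ j, Integrable (V j) μ) {η : ℝ}
    (hVη : ∀ j, μ[V j] ≤ η) {w : ι → ℝ} (hw0 : ∀ j, 0 ≤ w j) (hw1 : ∑ j, w j = 1) :
    μ[fun ω => ∑ j, V j ω * w j] ≤ η := by
  rw [integral_finsetSum _ fun j _ => (hV j).mul_const _]
  calc ∑ j, ∫ ω, V j ω * w j ∂μ = ∑ j, μ[V j] * w j := by simp only [integral_mul_const]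
    _ ≤ ∑ j, η * w j := sum_le_sum fun j _ => mul_le_mul_of_nonneg_right (hVη j) (hw0 j)
    _ = η := by rw [← mul_sum, hw1, mul_one]

theorem meas_ge_sum_mul_le [IsFiniteMeasure μ] {V : ι → Ω → ℝ} (hV0 : ∀ j ω, 0 ≤ V j ω)
    (hV : ∀ j, Integrable (V j) μ) {η : ℝ} (hVη : ∀ j, μ[V j] ≤ η) {w : ι → ℝ}
    (hw0 : ∀ j, 0 ≤ w j) (hw1 : ∑ j, w j = 1) {t : ℝ} (ht : 0 < t) :
    μ {ω | t ≤ ∑ j, V j ω * w j} ≤ ENNReal.ofReal (η / t) := by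
  have hmarkov := mul_meas_ge_le_integral_of_nonneg
    (ae_of_all _ fun ω => sum_nonneg fun j _ => mul_nonneg (hV0 j ω) (hw0 j))
    (integrable_finsetSum univ fun j _ => (hV j).mul_const (w j)) t
  rw [measureReal_def] at hmarkov
  rw [← ENNReal.ofReal_toReal (measure_ne_top μ _)]
  refine ENNReal.ofReal_le_ofReal ((le_div_iff₀ ht).2 ?_)
  linarith [integral_sum_mul_le hV hVη hw0 hw1]

variable [IsProbabilityMeasure μ]

theorem memLp_of_nonneg_of_le {X : Ω → ℝ} {M : ℝ} (hX : AEStronglyMeasurable X μ)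
    (h0 : ∀ ω, 0 ≤ X ω) (hM : ∀ ω, X ω ≤ M) (p : ℝ≥0∞) : MemLp X p μ :=
  .of_bound hX M (ae_of_all _ fun ω => by rw [Real.norm_of_nonneg (h0 ω)]; exact hM ω)

theorem variance_le_mul_integral_of_nonneg_of_le {X : Ω → ℝ} {M : ℝ}
    (hX : AEStronglyMeasurable X μ) (h0 : ∀ ω, 0 ≤ X ω) (hM : ∀ ω, X ω ≤ M) :
    Var[X; μ] ≤ M * μ[X] := by
  have hint : Integrable X μ := (memLp_of_nonneg_of_le hX h0 hM 1).integrable le_rfl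
  calc Var[X; μ] ≤ μ[X ^ 2] := variance_le_expectation_sq hX
    _ ≤ μ[fun ω => M * X ω] :=
        integral_mono_of_nonneg (f := X ^ 2) (ae_of_all _ fun ω => sq_nonneg (X ω))
          (hint.const_mul M) (ae_of_all _ fun ω => by
            simp only [Pi.pow_apply]; nlinarith [h0 ω, hM ω])
    _ = M * μ[X] := integral_const_mul M X

variable {X : ι → Ω → ℝ} {M : ℝ}

theorem variance_sum_mul_le (hX : ∀ j, Measurable (X j)) (h0 : ∀ j ω, 0 ≤ X j ω)
    (hM : ∀ j ω, X j ω ≤ M) (hind : Pairwise fun j k => IndepFun (X j) (X k) μ) (w : ι → ℝ) :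
    Var[fun ω => ∑ j, X j ω * w j; μ] ≤ M * ∑ j, w j ^ 2 * μ[X j] := by
  have hvar := IndepFun.variance_sum (s := univ)
    (fun j _ => (memLp_of_nonneg_of_le (hX j).aestronglyMeasurable (h0 j) (hM j) 2).mul_const
      (w j))
    fun j _ k _ hjk => (hind hjk).comp (measurable_id.mul_const (w j))
      (measurable_id.mul_const (w k))
  simp only [← Finset.sum_fn] at hvar ⊢
  rw [hvar, mul_sum]
  refine sum_le_sum fun j _ => ?_
  rw [variance_mul_const]
  nlinarith [variance_le_mul_integral_of_nonneg_of_le (μ := μ) (hX j).aestronglyMeasurable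
    (h0 j) (hM j), sq_nonneg (w j)]

theorem meas_ge_abs_sum_mul_sub_le (hX : ∀ j, Measurable (X j)) (h0 : ∀ j ω, 0 ≤ X j ω)
    (hM0 : 0 ≤ M) (hM : ∀ j ω, X j ω ≤ M) (hmean : ∀ j, μ[X j] ≤ 1)
    (hind : Pairwise fun j k => IndepFun (X j) (X k) μ) {w : ι → ℝ} (hw0 : ∀ j, 0 ≤ w j)
    (hw1 : ∑ j, w j = 1) {δ : ℝ} (hwδ : ∀ j, w j ≤ δ) {t : ℝ} (ht : 0 < t) :
    μ {ω | t ≤ |∑ j, X j ω * w j - μ[fun ω => ∑ j, X j ω * w j]|} ≤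
      ENNReal.ofReal (M * δ / t ^ 2) := by
  have hmem : MemLp (fun ω => ∑ j, X j ω * w j) 2 μ := memLp_finsetSum _ fun j _ =>
    (memLp_of_nonneg_of_le (hX j).aestronglyMeasurable (h0 j) (hM j) 2).mul_const (w j)
  refine (meas_ge_le_variance_div_sq hmem ht).trans (ENNReal.ofReal_le_ofReal ?_)
  gcongr
  calc Var[fun ω => ∑ j, X j ω * w j; μ] ≤ M * ∑ j, w j ^ 2 * μ[X j] :=
        variance_sum_mul_le hX h0 hM hind w
    _ ≤ M * ∑ j, w j * δ := by
        refine mul_le_mul_of_nonneg_left (sum_le_sum fun j _ => ?_) hM0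
        nlinarith [hw0 j, hwδ j, hmean j, mul_nonneg (hw0 j) (hw0 j)]
    _ = M * δ := by rw [← sum_mul, hw1, one_mul]

theorem measure_two_lt_sum_mul_le {Z : ι → Ω → ℝ} (hZ : ∀ j, Measurable (Z j))
    (hZ0 : ∀ j ω, 0 ≤ Z j ω) (hZint : ∀ j, Integrable (Z j) μ) (hZ1 : ∀ j, μ[Z j] ≤ 1)
    (hind : Pairwise fun j k => IndepFun (Z j) (Z k) μ) {M η : ℝ} (hM : 0 ≤ M)
    (htail : ∀ j, ∫ ω, (Z j ω - min (Z j ω) M) ∂μ ≤ η) {w : ι → ℝ} (hw0 : ∀ j, 0 ≤ w j)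
    (hw1 : ∑ j, w j = 1) {δ : ℝ} (hwδ : ∀ j, w j ≤ δ) :
    μ {ω | 2 < ∑ j, Z j ω * w j} ≤ ENNReal.ofReal (4 * M * δ + 2 * η) := by
  set T : ι → Ω → ℝ := fun j ω => min (Z j ω) M
  have hT : ∀ j, Measurable (T j) := fun j => (hZ j).min measurable_const
  have hT0 : ∀ j ω, 0 ≤ T j ω := fun j ω => le_min (hZ0 j ω) hM
  have hTM : ∀ j ω, T j ω ≤ M := fun j ω => min_le_right _ _
  have hTint : ∀ j, Integrable (T j) μ := fun j =>
    (memLp_of_nonneg_of_le (hT j).aestronglyMeasurable (hT0 j) (hTM j) 1).integrable le_rfl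
  have hT1 : ∀ j, μ[T j] ≤ 1 := fun j =>
    (integral_mono (hTint j) (hZint j) fun ω => min_le_left _ _).trans (hZ1 j)
  have hTind : Pairwise fun j k => IndepFun (T j) (T k) μ := fun j k hjk =>
    (hind hjk).comp (measurable_id.min measurable_const) (measurable_id.min measurable_const)
  have hdev := meas_ge_abs_sum_mul_sub_le hT hT0 hM hTM hT1 hTind hw0 hw1 hwδ
    (t := 1 / 2) (by norm_num)
  have hexcess := meas_ge_sum_mul_le (V := fun j ω => Z j ω - T j ω)
    (fun j ω => sub_nonneg.2 (min_le_left _ _)) (fun j => (hZint j).sub (hTint j)) htail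
    hw0 hw1 (t := 1 / 2) (by norm_num)
  have hmean := integral_sum_mul_le hTint hT1 hw0 hw1
  have hsplit : {ω | 2 < ∑ j, Z j ω * w j} ⊆
      {ω | 1 / 2 ≤ |∑ j, T j ω * w j - μ[fun ω => ∑ j, T j ω * w j]|} ∪
        {ω | 1 / 2 ≤ ∑ j, (Z j ω - T j ω) * w j} := by
    intro ω hω
    by_contra! hω'
    simp only [Set.mem_union, Set.mem_ofPred_eq, not_or, not_le, abs_lt] at hω hω'
    have : ∑ j, Z j ω * w j = ∑ j, T j ω * w j + ∑ j, (Z j ω - T j ω) * w j := by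
      rw [← sum_add_distrib]; exact sum_congr rfl fun j _ => by ring
    linarith [hω'.1.2]
  calc μ {ω | 2 < ∑ j, Z j ω * w j}
      ≤ ENNReal.ofReal (M * δ / (1 / 2) ^ 2) + ENNReal.ofReal (η / (1 / 2)) :=
        (measure_mono hsplit).trans ((measure_union_le _ _).trans (add_le_add hdev hexcess))
    _ = ENNReal.ofReal (4 * M * δ + 2 * η) := by
        obtain ⟨j⟩ : Nonempty ι := by
          rw [← not_isEmpty_iff]; intro; simp at hw1
        have hδ : 0 ≤ δ := (hw0 j).trans (hwδ j)
        have hη : 0 ≤ η :=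
          (integral_nonneg fun ω => sub_nonneg.2 (min_le_left _ _)).trans (htail j)
        rw [← ENNReal.ofReal_add (by positivity) (by positivity)]
        ring_nf

end WeightedSums

theorem exists_integral_sub_min_le {Ω : Type*} [MeasurableSpace Ω] {μ : Measure Ω}
    {f : Ω → ℝ} (hf : Integrable f μ) {η : ℝ} (hη : 0 < η) :
    ∃ M : ℝ, 0 ≤ M ∧ ∫ ω, (f ω - min (f ω) M) ∂μ ≤ η := by
  have hlim : Tendsto (fun k : ℕ => ∫ ω, (f ω - min (f ω) k) ∂μ) atTop (𝓝 0) := by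
    refine integral_zero Ω ℝ ▸ tendsto_integral_of_dominated_convergence (fun ω => |f ω|)
      (fun k => hf.1.sub (hf.1.inf aestronglyMeasurable_const)) hf.abs
      (fun k => ae_of_all _ fun ω => ?_) (ae_of_all _ fun ω => ?_)
    · have hk : (0 : ℝ) ≤ k := k.cast_nonneg
      rw [Real.norm_of_nonneg (sub_nonneg.2 (min_le_left _ _))]
      rcases min_cases (f ω) (k : ℝ) with ⟨h, _⟩ | ⟨h, _⟩ <;> rw [h] <;> grind
    · refine tendsto_const_nhds.congr' ?_
      filter_upwards [eventually_ge_atTop ⌈f ω⌉₊] with k hk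
      rw [min_eq_left ((Nat.le_ceil _).trans (by exact_mod_cast hk)), sub_self]
  obtain ⟨k, hk⟩ := (hlim.eventually (ge_mem_nhds hη)).exists
  exact ⟨k, k.cast_nonneg, hk⟩

theorem measure_two_lt_sum_sq_mul_sq_le {Ω Ω' ι : Type*} [MeasurableSpace Ω]
    [MeasurableSpace Ω'] [Fintype ι] {μ : Measure Ω} {ν : Measure Ω'} [IsProbabilityMeasure ν]
    {ξ : Ω → ℝ} (hξ : ∫ ω, ξ ω ^ 2 ∂μ = 1) {X : ι → Ω' → ℝ} (hX : ∀ j, Measurable (X j))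
    (hind : Pairwise fun j k => IndepFun (X j) (X k) ν) (hid : ∀ j, IdentDistrib (X j) ξ ν μ)
    {M : ℝ} (hM : 0 ≤ M) {y : ι → ℝ} (hy : ∑ j, y j ^ 2 = 1) {δ : ℝ} (hyδ : ∀ j, |y j| ≤ δ) :
    ν {ω | 2 < ∑ j, X j ω ^ 2 * y j ^ 2} ≤
      ENNReal.ofReal (4 * M * δ ^ 2 + 2 * ∫ ω, (ξ ω ^ 2 - min (ξ ω ^ 2) M) ∂μ) := by
  have hsq : ∀ j, IdentDistrib (fun ω => X j ω ^ 2) (fun ω => ξ ω ^ 2) ν μ := fun j =>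
    (hid j).comp (measurable_id.pow_const 2)
  refine measure_two_lt_sum_mul_le (fun j => (hX j).pow_const 2) (fun j ω => sq_nonneg _)
    (fun j => (hsq j).integrable_iff.2 (.of_integral_ne_zero (hξ ▸ one_ne_zero)))
    (fun j => ((hsq j).integral_eq.trans hξ).le)
    (fun j k hjk => (hind hjk).comp (measurable_id.pow_const 2) (measurable_id.pow_const 2)) hM
    (fun j => ((hid j).comp (u := fun x => x ^ 2 - min (x ^ 2) M) (by fun_prop)).integral_eq.le)
    (fun j => sq_nonneg _) hy fun j => ?_
  exact sq_le_sq.2 ((hyδ j).trans (le_abs_self δ))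

theorem exists_pos_forall_measure_two_lt_sum_sq_mul_sq_le {Ω : Type*} [MeasurableSpace Ω]
    {μ : Measure Ω} {ξ : Ω → ℝ} (hξ : ∫ ω, ξ ω ^ 2 ∂μ = 1) {p : ℝ} (hp : 0 < p) :
    ∃ δ : ℝ, 0 < δ ∧ ∀ (Ω' ι : Type*) [MeasurableSpace Ω'] [Fintype ι] (ν : Measure Ω')
      [IsProbabilityMeasure ν] (X : ι → Ω' → ℝ), (∀ j, Measurable (X j)) →
      (Pairwise fun j k => IndepFun (X j) (X k) ν) → (∀ j, IdentDistrib (X j) ξ ν μ) →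
      ∀ y : ι → ℝ, ∑ j, y j ^ 2 = 1 → (∀ j, |y j| ≤ δ) →
        ν {ω | 2 < ∑ j, X j ω ^ 2 * y j ^ 2} ≤ ENNReal.ofReal p := by
  obtain ⟨M, hM, htail⟩ := exists_integral_sub_min_le (η := p / 4)
    (Integrable.of_integral_ne_zero (hξ ▸ one_ne_zero) : Integrable (fun ω => ξ ω ^ 2) μ)
    (by positivity)
  refine ⟨√(p / (8 * (M + 1))), by positivity, fun Ω' ι _ _ ν _ X hX hind hid y hy hyδ => ?_⟩
  refine (measure_two_lt_sum_sq_mul_sq_le hξ hX hind hid hM hy hyδ).trans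
    (ENNReal.ofReal_le_ofReal ?_)
  have : 4 * M * (p / (8 * (M + 1))) ≤ p / 2 := by
    rw [mul_div_assoc', div_le_div_iff₀ (by positivity) (by norm_num)]
    nlinarith
  rw [Real.sq_sqrt (by positivity)]
  linarith

open Classical in
theorem measure_setOf_le_card_filter_mem_le {Ω ι : Type*} [MeasurableSpace Ω] {μ : Measure Ω}
    [Fintype ι] {E : ι → Set Ω} {p : ℝ≥0∞} (hE : ∀ S : Finset ι, μ (⋂ i ∈ S, E i) ≤ p ^ #S)
    (m : ℕ) : μ {ω | m ≤ #{i | ω ∈ E i}} ≤ (Fintype.card ι).choose m * p ^ m := by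
  have hcover : {ω | m ≤ #{i | ω ∈ E i}} ⊆ ⋃ S ∈ powersetCard m univ, ⋂ i ∈ S, E i := by
    intro ω hω
    obtain ⟨S, hS, rfl⟩ := exists_subset_card_eq hω
    refine Set.mem_biUnion (mem_powersetCard.2 ⟨subset_univ S, rfl⟩)
      (Set.mem_biInter fun i hi => ?_)
    simpa using hS hi
  calc μ {ω | m ≤ #{i | ω ∈ E i}} ≤ ∑ S ∈ powersetCard m univ, μ (⋂ i ∈ S, E i) :=
        (measure_mono hcover).trans (measure_biUnion_finset_le _ _)
    _ ≤ ∑ S ∈ powersetCard m (univ : Finset ι), p ^ m :=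
        sum_le_sum fun S hS => (mem_powersetCard.1 hS).2 ▸ hE S
    _ = (Fintype.card ι).choose m * p ^ m := by simp [nsmul_eq_mul]

theorem ceil_le_card_filter_not {ι : Type*} [Fintype ι] (P : ι → Prop) [DecidablePred P]
    {x : ℝ} (h : (#{i | P i} : ℝ) ≤ Fintype.card ι - x) : ⌈x⌉₊ ≤ #{i | ¬P i} := by
  have hsplit : (#{i | P i} : ℝ) + #{i | ¬P i} = Fintype.card ι := by
    exact_mod_cast card_filter_add_card_filter_not (s := univ) P
  rw [Nat.ceil_le]
  linarith

theorem choose_mul_exp_pow_le_exp {N m : ℕ} {ε K : ℝ} (hε : 0 < ε) (hK : -1 ≤ K)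
    (hm : ε * N ≤ m) :
    (N.choose m : ℝ) * Real.exp (-(K + 1) / ε) ^ m ≤ Real.exp (-(K * N)) := by
  have hchoose : (N.choose m : ℝ) ≤ Real.exp N := calc
    (N.choose m : ℝ) ≤ 2 ^ N := by exact_mod_cast Nat.choose_le_two_pow N m
    _ ≤ Real.exp 1 ^ N := by gcongr; linarith [Real.add_one_le_exp 1]
    _ = Real.exp N := by rw [← Real.exp_nat_mul, mul_one]
  have hpow : Real.exp (-(K + 1) / ε) ^ m ≤ Real.exp (-((K + 1) * N)) := by
    rw [← Real.exp_nat_mul, Real.exp_le_exp, mul_div_assoc', div_le_iff₀ hε]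
    nlinarith
  calc (N.choose m : ℝ) * Real.exp (-(K + 1) / ε) ^ m
      ≤ Real.exp N * Real.exp (-((K + 1) * N)) := by gcongr
    _ = Real.exp (-(K * N)) := by rw [← Real.exp_add]; ring_nf

theorem card_Iy_bound_general
    {Ω : Type*} [MeasureSpace Ω]
    (ξ : Ω → ℝ)
    (hξvar : ∫ ω, (ξ ω) ^ 2 = 1)
    (ε K : ℝ) (hε : 0 < ε) (hK : 0 < K) :
    ∃ δ : ℝ, 0 < δ ∧
      ∀ (N n : ℕ), n ≤ N →
        ∀ (Ω' : Type) [MeasureSpace Ω'] [IsProbabilityMeasure (ℙ : Measure Ω')]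
          (a : Fin N × Fin n → Ω' → ℝ),
          (∀ p, Measurable (a p)) →
          iIndepFun a ℙ →
          (∀ p, IdentDistrib (a p) ξ ℙ ℙ) →
          ∀ (y : Fin n → ℝ), (∑ j, (y j) ^ 2 = 1) → (∀ j, |y j| ≤ δ) →
            ℙ {ω | ((Finset.univ.filter
                  (fun i : Fin N => ∑ j, (a (i, j) ω) ^ 2 * (y j) ^ 2 ≤ 2)).card : ℝ) ≤
                (N : ℝ) - ε * N} ≤
              ENNReal.ofReal (Real.exp (-(K * N))) := by
  set p := Real.exp (-(K + 1) / ε)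
  have hp : 0 < p := Real.exp_pos _
  obtain ⟨δ, hδ, hrow⟩ := exists_pos_forall_measure_two_lt_sum_sq_mul_sq_le hξvar hp
  refine ⟨δ, hδ, fun N n _ Ω' _ _ a ha hind hid y hy hyδ => ?_⟩
  set E : Fin N → Set Ω' := fun i => {ω | 2 < ∑ j, a (i, j) ω ^ 2 * y j ^ 2}
  have hE : ∀ S : Finset (Fin N), ℙ (⋂ i ∈ S, E i) ≤ ENNReal.ofReal p ^ #S := fun S => by
    rw [(hind.curry ha).meas_biInter (s := E) fun i _ =>
      ⟨{v | 2 < ∑ j, v j ^ 2 * y j ^ 2}, by measurability, rfl⟩]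
    exact prod_le_pow_card _ _ _ fun i _ => hrow Ω' (Fin n) ℙ (fun j => a (i, j))
      (fun j => ha (i, j)) (fun j k hjk => hind.indepFun (by simpa using hjk))
      (fun j => hid (i, j)) y hy hyδ
  calc _ ≤ ℙ {ω | ⌈ε * N⌉₊ ≤ #{i | ω ∈ E i}} := measure_mono fun ω hω => by
        simpa [E] using ceil_le_card_filter_not (fun i => ∑ j, a (i, j) ω ^ 2 * y j ^ 2 ≤ 2)
          (by simpa using hω)
    _ ≤ N.choose ⌈ε * N⌉₊ * ENNReal.ofReal p ^ ⌈ε * N⌉₊ := by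
      simpa using measure_setOf_le_card_filter_mem_le hE ⌈ε * N⌉₊
    _ ≤ ENNReal.ofReal (Real.exp (-(K * N))) := by
      rw [← ENNReal.ofReal_pow hp.le, ← ENNReal.ofReal_natCast,
        ← ENNReal.ofReal_mul (by positivity)]
      exact ENNReal.ofReal_le_ofReal (choose_mul_exp_pow_le_exp hε (by linarith) (Nat.le_ceil _))

/-- (Lemma 3.3.) Let `ξ` be a symmetrically distributed random variable
with unit second moment. For every `ε > 0` and `K > 0` there is `δ > 0` (depending on
`ε`, `K` and the distribution of `ξ`) such that: whenever `N ≥ n`, `A = (a_{ij})` is an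
`N×n` matrix of i.i.d. copies of `ξ`, and `y ∈ S^{n-1}` satisfies `‖y‖_∞ ≤ δ`, the set
`I_y = {i : ∑_j a_{ij}² y_j² ≤ 2}` satisfies `P(|I_y| ≤ N − εN) ≤ exp(−KN)`. -/
theorem card_Iy_bound
    {Ω : Type*} [MeasureSpace Ω] [IsProbabilityMeasure (ℙ : Measure Ω)]
    (ξ : Ω → ℝ)
    (hξmeas : Measurable ξ)
    (hξsymm : IdentDistrib ξ (fun ω => -ξ ω) ℙ ℙ)
    (hξvar : ∫ ω, (ξ ω) ^ 2 = 1)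
    (ε K : ℝ) (hε : 0 < ε) (hK : 0 < K) :
    ∃ δ : ℝ, 0 < δ ∧
      ∀ (N n : ℕ), n ≤ N →
        ∀ (Ω' : Type) [MeasureSpace Ω'] [IsProbabilityMeasure (ℙ : Measure Ω')]
          (a : Fin N × Fin n → Ω' → ℝ),
          (∀ p, Measurable (a p)) →
          iIndepFun a ℙ →
          (∀ p, IdentDistrib (a p) ξ ℙ ℙ) →
          ∀ (y : Fin n → ℝ), (∑ j, (y j) ^ 2 = 1) → (∀ j, |y j| ≤ δ) →
            ℙ {ω | ((Finset.univ.filter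
                  (fun i : Fin N => ∑ j, (a (i, j) ω) ^ 2 * (y j) ^ 2 ≤ 2)).card : ℝ) ≤
                (N : ℝ) - ε * N} ≤
              ENNReal.ofReal (Real.exp (-(K * N))) :=
  card_Iy_bound_general ξ hξvar ε K hε hK
end

section
/- For every N ∈ ℕ there exist finite sets N₁, N₂ ⊂ ℝᴺ with |N₁| ≤ (12eN)^{√N} and |N₂| ≤ exp(C·N) for a universal constant C, such that N₁ consists of √N-sparse vectors of Euclidean norm at most 2, N₂ ⊂ {y ∈ S^{N-1} : ‖y‖_∞ ≤ 1/⌊N^{1/4}⌋}, and S^{N-1} ⊂ N₁ + N₂ + (2/√N)·B_∞ᴺ. -/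
open Finset

/-- truncation toward zero -/
noncomputable def tzi (x : ℝ) : ℤ := if 0 ≤ x then ⌊x⌋ else -⌊-x⌋

lemma tzi_nonneg (x : ℝ) (h : 0 ≤ x) : ((tzi x : ℝ)) = ⌊x⌋ := by simp [tzi, h]

lemma abs_tzi_le (x : ℝ) : |(tzi x : ℝ)| ≤ |x| := by
  rcases le_or_gt 0 x with h | h
  · simp only [tzi, if_pos h]
    rw [abs_of_nonneg h, abs_of_nonneg (by exact_mod_cast Int.floor_nonneg.2 h)]
    exact Int.floor_le x
  · simp only [tzi, if_neg (not_le.2 h)]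
    push_cast
    rw [abs_neg, abs_of_neg h, abs_of_nonneg (by exact_mod_cast Int.floor_nonneg.2 (by linarith))]
    exact Int.floor_le (-x)

lemma abs_sub_tzi_le_one (x : ℝ) : |x - tzi x| ≤ 1 := by
  rcases le_or_gt 0 x with h | h
  · simp only [tzi, if_pos h]
    have h1 := Int.floor_le x
    have h2 := Int.lt_floor_add_one x
    rw [abs_of_nonneg (by linarith)]; linarith
  · simp only [tzi, if_neg (not_le.2 h)]
    have h1 := Int.floor_le (-x)
    have h2 := Int.lt_floor_add_one (-x)
    push_cast
    rw [abs_le]; constructor <;> linarith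

lemma abs_sub_tzi_le_abs (x : ℝ) : |x - tzi x| ≤ |x| := by
  rcases le_or_gt 0 x with h | h
  · simp only [tzi, if_pos h]
    have h1 := Int.floor_le x
    have h0 : (0:ℝ) ≤ ⌊x⌋ := by exact_mod_cast Int.floor_nonneg.2 h
    rw [abs_of_nonneg (by linarith), abs_of_nonneg h]; linarith
  · simp only [tzi, if_neg (not_le.2 h)]
    have h1 := Int.floor_le (-x)
    have h0 : (0:ℝ) ≤ ⌊-x⌋ := by exact_mod_cast Int.floor_nonneg.2 (by linarith)
    push_cast
    rw [abs_of_nonpos (by linarith), abs_of_neg h]; linarith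

/-- scaled truncation toward zero -/
noncomputable def tr (s x : ℝ) : ℝ := s * tzi (x / s)

lemma tr_def (s x : ℝ) : tr s x = s * tzi (x / s) := rfl

lemma abs_tr_le (s x : ℝ) (hs : 0 < s) : |tr s x| ≤ |x| := by
  have := abs_tzi_le (x / s)
  have h2 : |tr s x| = s * |(tzi (x/s) : ℝ)| := by
    rw [tr, abs_mul, abs_of_pos hs]
  rw [h2]
  calc s * |(tzi (x/s):ℝ)| ≤ s * |x / s| := by nlinarith
    _ = |x| := by rw [abs_div, abs_of_pos hs]; field_simp
lemma abs_sub_tr_le (s x : ℝ) (hs : 0 < s) : |x - tr s x| ≤ s := by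
  have := abs_sub_tzi_le_one (x / s)
  have h2 : x - tr s x = s * (x/s - tzi (x/s)) := by rw [tr]; field_simp
  rw [h2, abs_mul, abs_of_pos hs]
  nlinarith
lemma abs_sub_tr_le_abs (s x : ℝ) (hs : 0 < s) : |x - tr s x| ≤ |x| := by
  have := abs_sub_tzi_le_abs (x / s)
  have h2 : x - tr s x = s * (x/s - tzi (x/s)) := by rw [tr]; field_simp
  rw [h2, abs_mul, abs_of_pos hs]
  calc s * |x/s - tzi (x/s)| ≤ s * |x/s| := by nlinarith
    _ = |x| := by rw [abs_div, abs_of_pos hs]; field_simp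

lemma pow_self_le_factorial_mul_exp (k : ℕ) : (k:ℝ)^k ≤ k.factorial * Real.exp k := by
  induction k with
  | zero => simp
  | succ k ih =>
    have key : ((k:ℝ)+1)^k ≤ (k:ℝ)^k * Real.exp 1 := by
      rcases Nat.eq_zero_or_pos k with rfl | hk
      · simpa using Real.one_le_exp zero_le_one
      · have hkp : (0:ℝ) < k := by exact_mod_cast hk
        have h1 : ((k:ℝ)+1) = (k:ℝ) * (1 + 1/(k:ℝ)) := by field_simp
        have h2 : (1 + 1/(k:ℝ))^k ≤ Real.exp 1 := by
          have := Real.add_one_le_exp (1/(k:ℝ))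
          calc (1 + 1/(k:ℝ))^k ≤ (Real.exp (1/(k:ℝ)))^k := by
                apply pow_le_pow_left₀ (by positivity) (by linarith)
            _ = Real.exp 1 := by
                rw [← Real.exp_nat_mul]
                congr 1; field_simp
        calc ((k:ℝ)+1)^k = (k:ℝ)^k * (1 + 1/(k:ℝ))^k := by rw [h1, mul_pow]
          _ ≤ (k:ℝ)^k * Real.exp 1 := by
              apply mul_le_mul_of_nonneg_left h2 (by positivity)
    have hexp : Real.exp ((k:ℕ)+1) = Real.exp k * Real.exp 1 := by
      rw [← Real.exp_add]
    push_cast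
    calc ((k:ℝ)+1)^(k+1) = ((k:ℝ)+1)^k * ((k:ℝ)+1) := by ring
      _ ≤ ((k:ℝ)^k * Real.exp 1) * ((k:ℝ)+1) := by
          apply mul_le_mul_of_nonneg_right key (by positivity)
      _ ≤ ((k.factorial:ℝ) * Real.exp k * Real.exp 1) * ((k:ℝ)+1) := by
          apply mul_le_mul_of_nonneg_right _ (by positivity)
          apply mul_le_mul_of_nonneg_right ih (Real.exp_pos 1).le
      _ = ((k:ℝ)+1) * k.factorial * (Real.exp k * Real.exp 1) := by ring
      _ = (k+1).factorial * (Real.exp k * Real.exp 1) := by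
          rw [Nat.factorial_succ]; push_cast; ring
      _ = (k+1).factorial * Real.exp ((k:ℝ)+1) := by rw [← Real.exp_add]


lemma exists_fix (N : ℕ) (hN : 0 < N) (z : Fin N → ℝ)
    (h1 : ∑ i, z i ^ 2 ≤ 1)
    (h2 : ∀ i, |z i| ≤ ((N:ℝ) ^ ((1:ℝ)/4))⁻¹) :
    ∃ w : Fin N → ℝ, (∑ i, w i ^ 2 = 1) ∧
      (∀ i, |w i| ≤ 1 / (⌊(N : ℝ) ^ ((1 : ℝ) / 4)⌋₊ : ℝ)) ∧
      (∀ i, |w i - z i| ≤ 3 / (2 * Real.sqrt N)) := by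
  have hN1 : (1:ℝ) ≤ N := by exact_mod_cast hN
  set q : ℝ := (N:ℝ) ^ ((1:ℝ)/4) with hq
  have hq1 : 1 ≤ q := Real.one_le_rpow hN1 (by norm_num)
  set m : ℕ := ⌊q⌋₊ with hm
  have hm1 : 1 ≤ m := Nat.le_floor (by simpa using hq1)
  have hmq : (m:ℝ) ≤ q := Nat.floor_le (by linarith)
  have hmpos : (0:ℝ) < m := by exact_mod_cast hm1
  set b : ℝ := 1 / (m:ℝ) with hb
  have hbpos : 0 < b := by positivity
  have hqb : q⁻¹ ≤ b := by
    rw [hb, one_div]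
    exact inv_anti₀ hmpos hmq
  have hzb : ∀ i, |z i| ≤ b := fun i => (h2 i).trans hqb
  set c : ℝ := 3 / (2 * Real.sqrt N) with hc
  have hsq : (0:ℝ) < Real.sqrt N := Real.sqrt_pos.2 (by linarith)
  have hcpos : 0 < c := by positivity
  -- the function
  set f : ℝ → ℝ := fun t => ∑ i, (min (|z i| + t) b) ^ 2 with hf
  have hcont : Continuous f := by
    apply continuous_finset_sum
    intro i _
    exact ((continuous_const.add continuous_id).min continuous_const).pow 2
  have hf0 : f 0 ≤ 1 := by
    have : f 0 = ∑ i, z i ^ 2 := by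
      apply Finset.sum_congr rfl
      intro i _
      rw [add_zero, min_eq_left (hzb i), sq_abs]
    rw [this]; exact h1
  have hfc : 1 ≤ f c := by
    have key : ∀ i : Fin N, min c b ^ 2 ≤ (min (|z i| + c) b) ^ 2 := by
      intro i
      have h1' : min c b ≤ min (|z i| + c) b := by
        apply min_le_min _ le_rfl
        have := abs_nonneg (z i); linarith
      have h0 : 0 ≤ min c b := le_min hcpos.le hbpos.le
      nlinarith
    have hsum : (N:ℝ) * min c b ^ 2 ≤ f c := by
      calc (N:ℝ) * min c b ^ 2 = ∑ _i : Fin N, min c b ^ 2 := by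
            rw [Finset.sum_const, card_univ, Fintype.card_fin, nsmul_eq_mul]
        _ ≤ f c := Finset.sum_le_sum (fun i _ => key i)
    rcases le_total c b with h | h
    · rw [min_eq_left h] at hsum
      have hc2 : c ^ 2 = 9 / (4 * N) := by
        rw [hc]
        rw [div_pow]
        rw [mul_pow]
        rw [Real.sq_sqrt (by positivity)]
        norm_num
      have : (N:ℝ) * (9 / (4*N)) = 9/4 := by field_simp
      rw [hc2, this] at hsum
      linarith
    · rw [min_eq_right h] at hsum
      have hm2 : (m:ℝ)^2 ≤ (N:ℝ) := by
        have : (m:ℝ)^2 ≤ q^2 := by nlinarith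
        have hq2 : q^2 = (N:ℝ) ^ ((1:ℝ)/2) := by
          rw [hq, ← Real.rpow_natCast ((N:ℝ) ^ ((1:ℝ)/4)) 2, ← Real.rpow_mul (by positivity)]
          norm_num
        have : q^2 ≤ (N:ℝ) := by
          rw [hq2]
          calc (N:ℝ) ^ ((1:ℝ)/2) ≤ (N:ℝ) ^ (1:ℝ) := by
                apply Real.rpow_le_rpow_of_exponent_le hN1 (by norm_num)
            _ = N := Real.rpow_one _
        nlinarith
      have hb2 : (N:ℝ) * b^2 = (N:ℝ)/(m:ℝ)^2 := by rw [hb]; field_simp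
      rw [hb2] at hsum
      have : (1:ℝ) ≤ (N:ℝ)/(m:ℝ)^2 := by
        rw [le_div_iff₀ (by positivity)]; linarith
      linarith
  -- IVT
  have hIVT : (1:ℝ) ∈ f '' (Set.Icc 0 c) := by
    apply intermediate_value_Icc hcpos.le hcont.continuousOn
    exact ⟨hf0, hfc⟩
  obtain ⟨t, ht, hft⟩ := hIVT
  obtain ⟨ht0, htc⟩ := ht
  refine ⟨fun i => (if z i < 0 then (-1:ℝ) else 1) * min (|z i| + t) b, ?_, ?_, ?_⟩
  · calc ∑ i, ((if z i < 0 then (-1:ℝ) else 1) * min (|z i| + t) b) ^ 2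
        = ∑ i, (min (|z i| + t) b) ^ 2 := by
          apply Finset.sum_congr rfl
          intro i _
          rcases lt_or_ge (z i) 0 with h | h
          · rw [if_pos h]; ring
          · rw [if_neg (not_lt.2 h)]; ring
      _ = 1 := hft
  · intro i
    have hmin0 : 0 ≤ min (|z i| + t) b := le_min (by positivity) hbpos.le
    have habs : |(if z i < 0 then (-1:ℝ) else 1) * min (|z i| + t) b| = min (|z i| + t) b := by
      rw [abs_mul]
      rcases lt_or_ge (z i) 0 with h | h
      · rw [if_pos h, abs_neg, abs_one, one_mul, abs_of_nonneg hmin0]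
      · rw [if_neg (not_lt.2 h), abs_one, one_mul, abs_of_nonneg hmin0]
    rw [habs, hb]
    exact min_le_right _ _
  · intro i
    have hkey : abs (min (|z i| + t) b - |z i|) ≤ t := by
      have hlo : |z i| ≤ min (|z i| + t) b := le_min (by linarith) (hzb i)
      have hhi : min (|z i| + t) b ≤ |z i| + t := min_le_left _ _
      rw [abs_le]; constructor <;> linarith
    have heq : |(if z i < 0 then (-1:ℝ) else 1) * min (|z i| + t) b - z i|
        = abs (min (|z i| + t) b - |z i|) := by
      rcases lt_or_ge (z i) 0 with h | h
      · rw [if_pos h, abs_of_neg h,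
          show (-1:ℝ) * min (-z i + t) b - z i = -(min (-z i + t) b - -z i) by ring,
          abs_neg]
      · rw [if_neg (not_lt.2 h), abs_of_nonneg h, one_mul]
    rw [heq]
    exact hkey.trans htc


lemma gauss_sum_le (J : ℕ) :
    ∑ j ∈ Finset.Icc (-(J:ℤ)) (J:ℤ), Real.exp (-(j:ℝ)^2/2) ≤ 5 - 4 * (Real.exp (-(1:ℝ)/2))^J := by
  induction J with
  | zero => norm_num
  | succ J ih =>
    have hx : Real.exp (-(1:ℝ)/2) ≤ 2/3 := by
      rw [show -(1:ℝ)/2 = -(1/2) by norm_num, Real.exp_neg]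
      rw [inv_le_comm₀ (Real.exp_pos _) (by norm_num)]
      calc ((2:ℝ)/3)⁻¹ ≤ 1/2 + 1 := by norm_num
        _ ≤ Real.exp (1/2) := Real.add_one_le_exp _
    have hx0 : 0 < Real.exp (-(1:ℝ)/2) := Real.exp_pos _
    have hsplit : Finset.Icc (-(J+1:ℤ)) (J+1:ℤ)
        = insert (-(J+1:ℤ)) (insert (J+1:ℤ) (Finset.Icc (-(J:ℤ)) (J:ℤ))) := by
      ext j; simp only [Finset.mem_Icc, Finset.mem_insert]; omega
    have h1 : ((J:ℤ)+1) ∉ insert (-(J+1:ℤ)) (Finset.Icc (-(J:ℤ)) (J:ℤ)) := by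
      simp only [Finset.mem_insert, Finset.mem_Icc]; omega
    have h2 : (-(J+1:ℤ)) ∉ insert ((J:ℤ)+1) (Finset.Icc (-(J:ℤ)) (J:ℤ)) := by
      simp only [Finset.mem_insert, Finset.mem_Icc]; omega
    push_cast at hsplit
    push_cast
    rw [hsplit, Finset.sum_insert h2, Finset.sum_insert (by simpa using h1)]
    push_cast
    have hterm : Real.exp (-((J:ℝ)+1)^2/2) ≤ (Real.exp (-(1:ℝ)/2))^(J+1) := by
      rw [← Real.exp_nat_mul]
      apply Real.exp_le_exp.2
      have : (0:ℝ) ≤ J := Nat.cast_nonneg J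
      push_cast
      nlinarith
    have hterm2 : (-(((J:ℝ))+1))^2 = ((J:ℝ)+1)^2 := by ring
    have hxp : (0:ℝ) < (Real.exp (-(1:ℝ)/2))^J := by positivity
    have hstep : (Real.exp (-(1:ℝ)/2))^(J+1) ≤ (2/3) * (Real.exp (-(1:ℝ)/2))^J := by
      rw [pow_succ]
      calc (Real.exp (-(1:ℝ)/2))^J * Real.exp (-(1:ℝ)/2)
          ≤ (Real.exp (-(1:ℝ)/2))^J * (2/3) := by nlinarith
        _ = (2/3) * (Real.exp (-(1:ℝ)/2))^J := by ring
    rw [hterm2]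
    nlinarith [hterm, hstep, ih]

lemma lattice_card_le (N : ℕ) (hN : 0 < N) (J : ℕ)
    [DecidablePred (fun z : Fin N → ℝ => ∑ i, z i ^ 2 ≤ 1)] :
    (((Fintype.piFinset (fun _ : Fin N =>
        Finset.image (fun j : ℤ => (j:ℝ) * (1/(2*Real.sqrt N))) (Finset.Icc (-(J:ℤ)) (J:ℤ)))).filter
      (fun z => ∑ i, z i ^ 2 ≤ 1)).card : ℝ) ≤ Real.exp (4 * N) := by
  have hN1 : (1:ℝ) ≤ N := by exact_mod_cast hN
  set s : ℝ := 1/(2*Real.sqrt N) with hs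
  have hsqN : (0:ℝ) < Real.sqrt N := Real.sqrt_pos.2 (by linarith)
  have hspos : 0 < s := by positivity
  have hs2 : s^2 = 1/(4*N) := by
    rw [hs, div_pow, mul_pow, Real.sq_sqrt (by positivity)]
    norm_num
  set G : Finset ℝ := Finset.image (fun j : ℤ => (j:ℝ) * s) (Finset.Icc (-(J:ℤ)) (J:ℤ)) with hG
  set L := Fintype.piFinset (fun _ : Fin N => G) with hL
  have step1 : ((L.filter (fun z => ∑ i, z i ^ 2 ≤ 1)).card : ℝ)
      ≤ ∑ z ∈ L.filter (fun z => ∑ i, z i ^ 2 ≤ 1), Real.exp (2*N*(1 - ∑ i, z i^2)) := by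
    rw [Finset.card_eq_sum_ones]
    push_cast
    apply Finset.sum_le_sum
    intro z hz
    have hz2 : ∑ i, z i ^ 2 ≤ 1 := (Finset.mem_filter.1 hz).2
    apply Real.one_le_exp
    nlinarith
  have step2 : ∑ z ∈ L.filter (fun z => ∑ i, z i ^ 2 ≤ 1), Real.exp (2*N*(1 - ∑ i, z i^2))
      ≤ ∑ z ∈ L, Real.exp (2*N*(1 - ∑ i, z i^2)) := by
    apply Finset.sum_le_sum_of_subset_of_nonneg (Finset.filter_subset _ _)
    intro z _ _
    positivity
  have step3 : ∑ z ∈ L, Real.exp (2*N*(1 - ∑ i, z i^2))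
      = Real.exp (2*N) * ∑ z ∈ L, ∏ i, Real.exp (-(2*N) * z i^2) := by
    rw [Finset.mul_sum]
    apply Finset.sum_congr rfl
    intro z _
    rw [← Real.exp_sum, ← Real.exp_add]
    congr 1
    rw [← Finset.mul_sum]
    ring
  have step4 : ∑ z ∈ L, ∏ i, Real.exp (-(2*N) * z i^2)
      = ∏ _i : Fin N, ∑ v ∈ G, Real.exp (-(2*N) * v^2) := by
    rw [Finset.prod_univ_sum]
  have step5 : ∑ v ∈ G, Real.exp (-(2*N) * v^2)
      = ∑ j ∈ Finset.Icc (-(J:ℤ)) (J:ℤ), Real.exp (-(j:ℝ)^2/2) := by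
    rw [hG, Finset.sum_image]
    · apply Finset.sum_congr rfl
      intro j _
      congr 1
      rw [mul_pow, hs2]
      field_simp
      ring
    · intro a _ b _ hab
      have := mul_right_cancel₀ (ne_of_gt hspos) hab
      exact_mod_cast this
  have step6 : ∑ j ∈ Finset.Icc (-(J:ℤ)) (J:ℤ), Real.exp (-(j:ℝ)^2/2) ≤ 5 := by
    have := gauss_sum_le J
    have hxp : (0:ℝ) ≤ (Real.exp (-(1:ℝ)/2))^J := by positivity
    linarith
  have h5 : (5:ℝ) ≤ Real.exp 2 := by
    have h := Real.exp_one_gt_d9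
    have : Real.exp 2 = Real.exp 1 * Real.exp 1 := by
      rw [← Real.exp_add]; norm_num
    nlinarith
  calc ((L.filter (fun z => ∑ i, z i ^ 2 ≤ 1)).card : ℝ)
      ≤ Real.exp (2*N) * ∏ _i : Fin N, ∑ v ∈ G, Real.exp (-(2*N) * v^2) := by
        rw [← step4, ← step3]; exact step1.trans step2
    _ ≤ Real.exp (2*N) * ∏ _i : Fin N, Real.exp 2 := by
        apply mul_le_mul_of_nonneg_left _ (Real.exp_pos _).le
        apply Finset.prod_le_prod
        · intro i _
          apply Finset.sum_nonneg
          intro v _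
          positivity
        · intro i _
          rw [step5]
          exact step6.trans h5
    _ = Real.exp (4*N) := by
        rw [Finset.prod_const, ← Real.exp_nat_mul, ← Real.exp_add]
        congr 1
        rw [card_univ, Fintype.card_fin]
        ring


set_option maxHeartbeats 4000000 in
/-- (Sphere decomposition.) There is a universal constant `C > 0`
such that for every `N` there are finite sets `N₁, N₂ ⊂ ℝᴺ` with
`|N₁| ≤ (12eN)^{√N}`, `|N₂| ≤ exp(CN)`, `N₁` consisting of `√N`-sparse vectors of
Euclidean norm at most `2`, `N₂ ⊆ {y ∈ S^{N-1} : ‖y‖_∞ ≤ 1/⌊N^{1/4}⌋}`, and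
`S^{N-1} ⊆ N₁ + N₂ + (2/√N) B_∞ᴺ`. -/
theorem sphere_decomposition :
    ∃ C : ℝ, 0 < C ∧
      ∀ N : ℕ,
        ∃ Net1 Net2 : Finset (Fin N → ℝ),
          (Net1.card : ℝ) ≤ (12 * Real.exp 1 * N) ^ (Real.sqrt N) ∧
          (Net2.card : ℝ) ≤ Real.exp (C * N) ∧
          (∀ v ∈ Net1,
            (((Finset.univ.filter fun i : Fin N => v i ≠ 0).card : ℝ) ≤ Real.sqrt N) ∧
            Real.sqrt (∑ i, (v i) ^ 2) ≤ 2) ∧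
          (∀ v ∈ Net2, (∑ i, (v i) ^ 2 = 1) ∧
            ∀ i, |v i| ≤ 1 / (⌊(N : ℝ) ^ ((1 : ℝ) / 4)⌋₊ : ℝ)) ∧
          ∀ y : Fin N → ℝ, (∑ i, (y i) ^ 2 = 1) →
            ∃ y1 ∈ Net1, ∃ y2 ∈ Net2,
              ∀ i, |y i - y1 i - y2 i| ≤ 2 / Real.sqrt N := by
  refine ⟨4, by norm_num, fun N => ?_⟩
  rcases Nat.eq_zero_or_pos N with rfl | hNpos
  · refine ⟨∅, ∅, ?_, ?_, ?_, ?_, ?_⟩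
    · simp
    · simp [Real.exp_nonneg]
    · simp
    · simp
    · intro y hy; exfalso; simpa using hy
  classical
  have hN1 : (1:ℝ) ≤ N := by exact_mod_cast hNpos
  have hNpos' : (0:ℝ) < N := by linarith
  set sq : ℝ := Real.sqrt N with hsqdef
  have hsq1 : 1 ≤ sq := by
    rw [hsqdef, show (1:ℝ) = Real.sqrt 1 by simp]
    exact Real.sqrt_le_sqrt hN1
  have hsqpos : 0 < sq := by linarith
  have hsqsq : sq * sq = N := Real.mul_self_sqrt (by positivity)
  set q : ℝ := (N:ℝ) ^ ((1:ℝ)/4) with hqdef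
  have hq1 : 1 ≤ q := Real.one_le_rpow hN1 (by norm_num)
  have hqpos : 0 < q := by linarith
  have hq2 : q^2 = sq := by
    rw [hqdef, hsqdef, ← Real.rpow_natCast ((N:ℝ) ^ ((1:ℝ)/4)) 2, ← Real.rpow_mul (by positivity),
      Real.sqrt_eq_rpow]
    norm_num
  set θ : ℝ := q⁻¹ with hθdef
  have hθpos : 0 < θ := by positivity
  have hθ1 : θ ≤ 1 := by rw [hθdef]; rw [inv_le_one_iff₀]; right; exact hq1
  -- k, the sparsity parameter
  set k : ℕ := ⌊sq⌋₊ with hkdef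
  have hk1 : 1 ≤ k := Nat.le_floor (by simpa using hsq1)
  have hkpos : (0:ℝ) < k := by exact_mod_cast hk1
  have hksq : (k:ℝ) ≤ sq := Nat.floor_le hsqpos.le
  have hsqk : sq ≤ 2*k := by
    have h1 := Nat.lt_floor_add_one sq
    have h2 : sq < (k:ℝ) + 1 := by exact_mod_cast h1
    have h3 : (1:ℝ) ≤ (k:ℝ) := by exact_mod_cast hk1
    linarith
  have hkN : k ≤ N := by
    have hsqN : sq ≤ (N:ℝ) := by nlinarith
    calc k = ⌊sq⌋₊ := rfl
      _ ≤ ⌊(N:ℝ)⌋₊ := Nat.floor_le_floor hsqN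
      _ = N := Nat.floor_natCast N
  -- grid for Net1
  set Jg : ℕ := ⌈q⌉₊ with hJgdef
  have hqJg : q ≤ (Jg:ℝ) := Nat.le_ceil q
  have hJgq : (Jg:ℝ) ≤ q + 1 := by
    have := Nat.ceil_lt_add_one hqpos.le
    linarith
  set Gr : Finset ℝ := Finset.image (fun j : ℤ => θ * (j:ℝ)) (Finset.Icc (-(Jg:ℤ)) (Jg:ℤ))
    with hGrdef
  set Net1 : Finset (Fin N → ℝ) :=
    (((univ : Finset (Fin N)).powersetCard k).biUnion
      (fun S => Fintype.piFinset (fun i => if i ∈ S then Gr else {(0:ℝ)}))).filter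
      (fun v => ∑ i, v i ^ 2 ≤ 4) with hNet1def
  -- lattice for Net2
  set JL : ℕ := 2 * Jg with hJLdef
  set s : ℝ := 1/(2*Real.sqrt N) with hsdef
  have hspos : 0 < s := by
    rw [hsdef]
    have h2 : (0:ℝ) < 2 * Real.sqrt N := by rw [← hsqdef]; linarith
    positivity
  set Gz : Finset ℝ := Finset.image (fun j : ℤ => (j:ℝ) * (1/(2*Real.sqrt N)))
    (Finset.Icc (-(JL:ℤ)) (JL:ℤ)) with hGzdef
  have hbound : θ = ((N:ℝ) ^ ((1:ℝ)/4))⁻¹ := by rw [hθdef, hqdef]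
  set L' : Finset (Fin N → ℝ) := (Fintype.piFinset fun _ : Fin N => Gz).filter
    (fun z => (∑ i, z i ^ 2 ≤ 1) ∧ ∀ i, |z i| ≤ ((N:ℝ) ^ ((1:ℝ)/4))⁻¹) with hL'def
  set fix : (Fin N → ℝ) → (Fin N → ℝ) := fun z =>
    if h : (∑ i, z i ^ 2 ≤ 1) ∧ ∀ i, |z i| ≤ ((N:ℝ) ^ ((1:ℝ)/4))⁻¹ then
      Classical.choose (exists_fix N hNpos z h.1 h.2) else 0 with hfixdef
  have fixspec : ∀ z, ((∑ i, z i ^ 2 ≤ 1) ∧ ∀ i, |z i| ≤ ((N:ℝ) ^ ((1:ℝ)/4))⁻¹) →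
      (∑ i, fix z i ^ 2 = 1) ∧
      (∀ i, |fix z i| ≤ 1 / (⌊(N : ℝ) ^ ((1 : ℝ) / 4)⌋₊ : ℝ)) ∧
      (∀ i, |fix z i - z i| ≤ 3 / (2 * Real.sqrt N)) := by
    intro z h
    have : fix z = Classical.choose (exists_fix N hNpos z h.1 h.2) := by
      rw [hfixdef]; simp only [dif_pos h]
    rw [this]
    exact Classical.choose_spec (exists_fix N hNpos z h.1 h.2)
  set Net2 : Finset (Fin N → ℝ) := L'.image fix with hNet2def
  clear_value Net2 L' Gz s JL Net1 Gr Jg k θ q sq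
  refine ⟨Net1, Net2, ?_, ?_, ?_, ?_, ?_⟩
  · -- card Net1
    have hB : Net1.card ≤ (Nat.choose N k) * Gr.card ^ k := by
      have hstep : Net1.card ≤ (((univ : Finset (Fin N)).powersetCard k).biUnion
          (fun S => Fintype.piFinset (fun i => if i ∈ S then Gr else {(0:ℝ)}))).card := by
        rw [hNet1def]
        exact Finset.card_filter_le _ _
      refine hstep.trans ?_
      calc (((univ : Finset (Fin N)).powersetCard k).biUnion
            (fun S => Fintype.piFinset (fun i => if i ∈ S then Gr else {(0:ℝ)}))).card
          ≤ ∑ S ∈ (univ : Finset (Fin N)).powersetCard k,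
              (Fintype.piFinset (fun i => if i ∈ S then Gr else {(0:ℝ)})).card :=
            Finset.card_biUnion_le
        _ = ∑ _S ∈ (univ : Finset (Fin N)).powersetCard k, Gr.card ^ k := by
            apply Finset.sum_congr rfl
            intro S hS
            rw [Fintype.card_piFinset]
            calc ∏ i, (if i ∈ S then Gr else {(0:ℝ)}).card
                = ∏ i, (if i ∈ S then Gr.card else 1) := by
                  apply Finset.prod_congr rfl
                  intro i _
                  split <;> simp
              _ = ∏ _i ∈ S, Gr.card := Fintype.prod_ite_mem S _
              _ = Gr.card ^ S.card := Finset.prod_const _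
              _ = Gr.card ^ k := by rw [Finset.mem_powersetCard_univ.1 hS]
        _ = ((univ : Finset (Fin N)).powersetCard k).card * Gr.card ^ k := by
            rw [Finset.sum_const, smul_eq_mul]
        _ = Nat.choose N k * Gr.card ^ k := by
            rw [Finset.card_powersetCard, Finset.card_univ, Fintype.card_fin]
    have hg12 : (Gr.card : ℝ) ≤ 12 * k := by
      have h1 : Gr.card ≤ (Finset.Icc (-(Jg:ℤ)) (Jg:ℤ)).card := by
        rw [hGrdef]; exact Finset.card_image_le
      have h2 : (Finset.Icc (-(Jg:ℤ)) (Jg:ℤ)).card = 2*Jg + 1 := by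
        rw [Int.card_Icc]; omega
      have hgr : (Gr.card : ℝ) ≤ 2*(Jg:ℝ) + 1 := by
        rw [h2] at h1
        have : (Gr.card : ℝ) ≤ ((2*Jg+1 : ℕ) : ℝ) := by exact_mod_cast h1
        push_cast at this
        linarith
      have hqsq : q ≤ sq := by nlinarith
      have hk1' : (1:ℝ) ≤ k := by exact_mod_cast hk1
      nlinarith [hJgq]
    have hfact : (1:ℝ) / (k.factorial : ℝ) ≤ Real.exp 1 ^ k / (k:ℝ)^k := by
      have h1 := pow_self_le_factorial_mul_exp k
      have h2 : Real.exp (k:ℕ) = Real.exp 1 ^ k := (Real.exp_one_pow k).symm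
      rw [h2] at h1
      have hfp : (0:ℝ) < k.factorial := by exact_mod_cast k.factorial_pos
      have hkk : (0:ℝ) < (k:ℝ)^k := by positivity
      rw [div_le_div_iff₀ hfp hkk]
      nlinarith
    have hepos : (0:ℝ) < Real.exp 1 := Real.exp_pos 1
    have he1 : (1:ℝ) ≤ Real.exp 1 := Real.one_le_exp zero_le_one
    have hgr0 : (0:ℝ) ≤ (Gr.card : ℝ) := Nat.cast_nonneg _
    have hbase1 : (1:ℝ) ≤ 12 * Real.exp 1 * N := by nlinarith [he1, hN1]
    calc (Net1.card : ℝ) ≤ (Nat.choose N k : ℝ) * (Gr.card:ℝ)^k := by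
          exact_mod_cast hB
      _ ≤ ((N:ℝ)^k / k.factorial) * (Gr.card:ℝ)^k := by
          apply mul_le_mul_of_nonneg_right (Nat.choose_le_pow_div k N) (by positivity)
      _ = (N:ℝ)^k * (1 / k.factorial) * (Gr.card:ℝ)^k := by ring
      _ ≤ (N:ℝ)^k * (Real.exp 1 ^ k / (k:ℝ)^k) * (Gr.card:ℝ)^k := by
          apply mul_le_mul_of_nonneg_right _ (by positivity)
          apply mul_le_mul_of_nonneg_left hfact (by positivity)
      _ = ((N:ℝ) * Real.exp 1 * (Gr.card:ℝ) / (k:ℝ))^k := by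
          rw [div_pow, mul_pow, mul_pow]
          ring
      _ ≤ (12 * Real.exp 1 * (N:ℝ))^k := by
          apply pow_le_pow_left₀ (by positivity)
          rw [div_le_iff₀ hkpos]
          nlinarith
      _ = (12 * Real.exp 1 * (N:ℝ)) ^ ((k:ℕ):ℝ) := by
          rw [Real.rpow_natCast]
      _ ≤ (12 * Real.exp 1 * (N:ℝ)) ^ sq := by
          apply Real.rpow_le_rpow_of_exponent_le hbase1 hksq
  · -- card Net2
    have h1 : Net2.card ≤ L'.card := by
      rw [hNet2def]; exact Finset.card_image_le
    have h2 : L'.card ≤ ((Fintype.piFinset fun _ : Fin N => Gz).filter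
        (fun z => ∑ i, z i ^ 2 ≤ 1)).card := by
      apply Finset.card_le_card
      intro zz hzz
      rw [hL'def, Finset.mem_filter] at hzz
      rw [Finset.mem_filter]
      exact ⟨hzz.1, hzz.2.1⟩
    have h3 := lattice_card_le N hNpos JL
    calc (Net2.card : ℝ) ≤ (((Fintype.piFinset fun _ : Fin N => Gz).filter
          (fun z => ∑ i, z i ^ 2 ≤ 1)).card : ℝ) := by exact_mod_cast h1.trans h2
      _ ≤ Real.exp (4 * N) := by rw [hGzdef]; exact h3
  · -- Net1 properties
    intro v hv
    rw [hNet1def, Finset.mem_filter] at hv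
    obtain ⟨hv1, hv2⟩ := hv
    rw [Finset.mem_biUnion] at hv1
    obtain ⟨S, hS, hvS⟩ := hv1
    rw [Finset.mem_powersetCard_univ] at hS
    rw [Fintype.mem_piFinset] at hvS
    constructor
    · have hsub : (Finset.univ.filter fun i : Fin N => v i ≠ 0) ⊆ S := by
        intro i hi
        rw [Finset.mem_filter] at hi
        by_contra hiS
        have := hvS i
        rw [if_neg hiS, Finset.mem_singleton] at this
        exact hi.2 this
      have := Finset.card_le_card hsub
      calc ((Finset.univ.filter fun i : Fin N => v i ≠ 0).card : ℝ)
          ≤ (S.card : ℝ) := by exact_mod_cast this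
        _ = (k : ℝ) := by rw [hS]
        _ ≤ sq := hksq
    · have : Real.sqrt (∑ i, v i ^ 2) ≤ Real.sqrt 4 := Real.sqrt_le_sqrt hv2
      rwa [show (4:ℝ) = 2^2 by norm_num, Real.sqrt_sq (by norm_num : (0:ℝ) ≤ 2)] at this
  · -- Net2 properties
    intro v hv
    rw [hNet2def, Finset.mem_image] at hv
    obtain ⟨z, hz, rfl⟩ := hv
    rw [hL'def, Finset.mem_filter] at hz
    obtain ⟨-, hcond⟩ := hz
    obtain ⟨hs1, hs2, -⟩ := fixspec z hcond
    refine ⟨hs1, ?_⟩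
    rw [hqdef]
    exact hs2
  · -- covering
    intro y hy
    have habs1 : ∀ i, |y i| ≤ 1 := by
      intro i
      have h1 : y i ^ 2 ≤ 1 := by
        rw [← hy]
        exact Finset.single_le_sum (fun j _ => sq_nonneg (y j)) (Finset.mem_univ i)
      nlinarith [abs_nonneg (y i), sq_abs (y i)]
    set T : Finset (Fin N) := Finset.univ.filter (fun i => θ < |y i|) with hTdef
    clear_value T
    have hTcard : (T.card : ℝ) ≤ sq := by
      have h1 : (T.card : ℝ) * θ^2 ≤ ∑ i ∈ T, y i ^ 2 := by
        calc (T.card : ℝ) * θ^2 = ∑ _i ∈ T, θ^2 := by rw [Finset.sum_const, nsmul_eq_mul]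
          _ ≤ ∑ i ∈ T, y i ^ 2 := by
              apply Finset.sum_le_sum
              intro i hi
              rw [hTdef, Finset.mem_filter] at hi
              nlinarith [hi.2, abs_nonneg (y i), sq_abs (y i)]
      have h2 : ∑ i ∈ T, y i ^ 2 ≤ 1 := by
        rw [← hy]
        exact Finset.sum_le_sum_of_subset_of_nonneg (Finset.subset_univ T)
          (fun i _ _ => sq_nonneg (y i))
      have hθ2 : θ^2 = sq⁻¹ := by
        rw [hθdef, ← hq2, inv_pow]
      rw [hθ2] at h1
      have := le_trans h1 h2
      rw [mul_inv_le_iff₀ hsqpos] at this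
      simpa using this
    have hTk : T.card ≤ k := by rw [hkdef]; exact Nat.le_floor hTcard
    obtain ⟨S, hTS, hSu, hScard⟩ :=
      Finset.exists_subsuperset_card_eq (Finset.subset_univ T) hTk (by simpa using hkN)
    set y1 : Fin N → ℝ := fun i => if i ∈ T then tr θ (y i) else 0 with hy1def
    clear_value y1
    have hy1mem : y1 ∈ Net1 := by
      rw [hNet1def, Finset.mem_filter]
      constructor
      · rw [Finset.mem_biUnion]
        refine ⟨S, Finset.mem_powersetCard_univ.2 hScard, ?_⟩
        rw [Fintype.mem_piFinset]
        intro i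
        by_cases hiS : i ∈ S
        · rw [if_pos hiS, hGrdef]
          by_cases hiT : i ∈ T
          · rw [hy1def]
            simp only [if_pos hiT]
            refine Finset.mem_image.2 ⟨tzi (y i / θ), ?_, (tr_def θ (y i)).symm⟩
            rw [Finset.mem_Icc]
            have hb : |(tzi (y i / θ) : ℝ)| ≤ (Jg:ℝ) := by
              calc |(tzi (y i / θ) : ℝ)| ≤ |y i / θ| := abs_tzi_le _
                _ = |y i| / θ := by rw [abs_div, abs_of_pos hθpos]
                _ ≤ 1 / θ := by
                    gcongr
                    exact habs1 i
                _ = q := by rw [hθdef, one_div, inv_inv]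
                _ ≤ (Jg:ℝ) := hqJg
            have := abs_le.1 hb
            constructor <;> [exact_mod_cast this.1; exact_mod_cast this.2]
          · rw [hy1def]
            simp only [if_neg hiT]
            refine Finset.mem_image.2 ⟨0, ?_, by simp⟩
            simp
        · rw [if_neg hiS, Finset.mem_singleton, hy1def]
          simp only [if_neg (fun h => hiS (hTS h))]
      · -- ∑ y1^2 ≤ 4
        have : ∑ i, y1 i ^ 2 ≤ ∑ i, y i ^ 2 := by
          apply Finset.sum_le_sum
          intro i _
          rw [hy1def]
          by_cases hiT : i ∈ T
          · simp only [if_pos hiT]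
            have := abs_tr_le θ (y i) hθpos
            nlinarith [abs_nonneg (tr θ (y i)), sq_abs (tr θ (y i)), sq_abs (y i)]
          · simp only [if_neg hiT]
            simpa using sq_nonneg (y i)
        rw [hy] at this
        linarith
    -- residual
    set r : Fin N → ℝ := fun i => y i - y1 i with hrdef
    clear_value r
    have hr_abs : ∀ i, |r i| ≤ θ := by
      intro i
      rw [hrdef, hy1def]
      by_cases hiT : i ∈ T
      · simp only [if_pos hiT]
        exact abs_sub_tr_le θ (y i) hθpos
      · simp only [if_neg hiT, sub_zero]
        have : ¬ (θ < |y i|) := by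
          intro hcontra
          exact hiT (by rw [hTdef]; exact Finset.mem_filter.2 ⟨Finset.mem_univ i, hcontra⟩)
        linarith [not_lt.1 this]
    have hr_sq : ∑ i, r i ^ 2 ≤ 1 := by
      rw [← hy]
      apply Finset.sum_le_sum
      intro i _
      rw [hrdef, hy1def]
      by_cases hiT : i ∈ T
      · simp only [if_pos hiT]
        have := abs_sub_tr_le_abs θ (y i) hθpos
        nlinarith [abs_nonneg (y i - tr θ (y i)), sq_abs (y i - tr θ (y i)), sq_abs (y i)]
      · simp only [if_neg hiT, sub_zero]
        exact le_rfl
    set z : Fin N → ℝ := fun i => tr s (r i) with hzdef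
    clear_value z
    have hz_abs : ∀ i, |z i| ≤ |r i| := by
      intro i
      simp only [hzdef]
      exact abs_tr_le s (r i) hspos
    have hz_cond : (∑ i, z i ^ 2 ≤ 1) ∧ ∀ i, |z i| ≤ ((N:ℝ) ^ ((1:ℝ)/4))⁻¹ := by
      constructor
      · calc ∑ i, z i ^ 2 ≤ ∑ i, r i ^ 2 := by
              apply Finset.sum_le_sum
              intro i _
              nlinarith [hz_abs i, abs_nonneg (z i), sq_abs (z i), sq_abs (r i)]
          _ ≤ 1 := hr_sq
      · intro i
        rw [← hbound]
        exact (hz_abs i).trans (hr_abs i)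
    have hzL' : z ∈ L' := by
      rw [hL'def, Finset.mem_filter]
      refine ⟨?_, hz_cond⟩
      rw [Fintype.mem_piFinset]
      intro i
      rw [hGzdef]
      refine Finset.mem_image.2 ⟨tzi (r i / s), ?_, ?_⟩
      · rw [Finset.mem_Icc]
        have hb : |(tzi (r i / s) : ℝ)| ≤ (JL:ℝ) := by
          calc |(tzi (r i / s) : ℝ)| ≤ |r i / s| := abs_tzi_le _
            _ = |r i| / s := by rw [abs_div, abs_of_pos hspos]
            _ ≤ θ / s := by
                gcongr
                exact hr_abs i
            _ = θ * (2 * sq) := by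
                rw [hsdef, hsqdef]
                field_simp
            _ = 2 * q := by
                rw [hθdef, ← hq2]
                field_simp
            _ ≤ (JL:ℝ) := by
                rw [hJLdef]
                push_cast
                linarith
        have := abs_le.1 hb
        constructor <;> [exact_mod_cast this.1; exact_mod_cast this.2]
      · simp only [hzdef, tr_def, hsdef]
        ring
    have hy2mem : fix z ∈ Net2 := by
      rw [hNet2def]
      exact Finset.mem_image_of_mem fix hzL'
    obtain ⟨-, -, hfix3⟩ := fixspec z hz_cond
    refine ⟨y1, hy1mem, fix z, hy2mem, ?_⟩
    intro i
    have h1 : |r i - z i| ≤ s := by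
      simp only [hzdef]
      exact abs_sub_tr_le s (r i) hspos
    have h2 : |z i - fix z i| ≤ 3 / (2 * Real.sqrt N) := by
      rw [abs_sub_comm]; exact hfix3 i
    have heq : y i - y1 i - fix z i = (r i - z i) + (z i - fix z i) := by
      rw [hrdef]; ring
    calc |y i - y1 i - fix z i| = |(r i - z i) + (z i - fix z i)| := by rw [heq]
      _ ≤ |r i - z i| + |z i - fix z i| := abs_add_le _ _
      _ ≤ s + 3 / (2 * Real.sqrt N) := add_le_add h1 h2
      _ = 2 / sq := by
          have hsqrt : Real.sqrt (N:ℝ) ≠ 0 := by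
            rw [← hsqdef]; exact ne_of_gt hsqpos
          rw [hsdef, hsqdef]
          field_simp
          ring
end
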